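/- arXiv:1702.02060 — 7 statements merged into one kernel-verified Lean document; each statement's English description precedes it below -/
import Mathlib

section
/- For every integer k ≥ 1, the rank number of the path P_{2^k−1} equals k, and the standard ranking is the unique k-ranking of P_{2^k−1}. -/
open SimpleGraph

/-- `f` is a `k`-ranking of `G`: labels lie in `{1,…,k}` and whenever two distinct
vertices get the same label, every path connecting them contains a vertex of
strictly larger label. -/
def IsRanking {V : Type*} (G : SimpleGraph V) (k : ℕ) (f : V → ℕ) : Prop :=
  (∀ v, 1 ≤ f v ∧ f v ≤ k) ∧
  ∀ u v, u ≠ v → f u = f v → ∀ p : G.Walk u v, p.IsPath → ∃ w ∈ p.support, f u < f w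

/-- The rank number `χᵣ(G)`: the least `k` such that `G` admits a `k`-ranking. -/
noncomputable def rankNumber {V : Type*} (G : SimpleGraph V) : ℕ :=
  sInf {k | ∃ f : V → ℕ, IsRanking G k f}

/-- The path `P_n` on vertices `v_1, …, v_n` (vertex `vᵢ` is the natural number `i`),
with edges `vᵢ v_{i+1}` for `1 ≤ i ≤ n - 1`. -/
def pathG (n : ℕ) : SimpleGraph ℕ :=
  SimpleGraph.fromRel (fun a b => 1 ≤ a ∧ b = a + 1 ∧ b ≤ n)

/-- The label of `vᵢ` in the standard ranking of a path: `α + 1` where `2^α` is the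
largest power of `2` dividing `i`. -/
def standardLabel (i : ℕ) : ℕ := padicValNat 2 i + 1

/-! On `P_n` a labelling is a ranking iff, whenever a label is repeated at positions `u < v`,
some position strictly between them carries a larger label; so everything happens on integer
intervals. An interval of `2 ^ k` vertices carries a label `≥ k + 1`: the largest labels of its two
halves either differ, or coincide and force a larger one between them. In a `k`-ranking of
`2 ^ k - 1` vertices the label `k` therefore occurs, in both overlapping halves of length
`2 ^ (k - 1)`, and at most once, so exactly at the midpoint; induction on both sides gives the
standard ranking. The standard ranking is a ranking because if `u < v` have the same `2`-adic
valuation `α`, then `u < u + 2 ^ α < v` and `u + 2 ^ α` has larger valuation. -/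

theorem pathG_adj_iff {n a b : ℕ} :
    (pathG n).Adj a b ↔ (b = a + 1 ∨ a = b + 1) ∧ 1 ≤ min a b ∧ max a b ≤ n := by
  rw [pathG, fromRel_adj]
  omega

theorem pathG_walk_mem_support {n u v : ℕ} (p : (pathG n).Walk u v) {m : ℕ}
    (hm : min u v ≤ m) (hm' : m ≤ max u v) : m ∈ p.support := by
  induction p with
  | nil =>
    simp only [Walk.support_nil, List.mem_singleton]
    omega
  | @cons u b v h q ih =>
    rw [Walk.support_cons, List.mem_cons]
    rcases eq_or_ne m u with rfl | hmu
    · exact Or.inl rfl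
    · have := pathG_adj_iff.mp h
      exact Or.inr (ih (by omega) (by omega))

theorem pathG_walk_start_bounds {n u v : ℕ} (p : (pathG n).Walk u v) (huv : u ≠ v) :
    1 ≤ u ∧ u ≤ n := by
  cases p with
  | nil => exact absurd rfl huv
  | cons h _ => have := pathG_adj_iff.mp h; omega

theorem pathG_exists_isPath_support_subset {n a b : ℕ} (ha : 1 ≤ a) (hab : a ≤ b) (hb : b ≤ n) :
    ∃ p : (pathG n).Walk a b, p.IsPath ∧ ∀ w ∈ p.support, a ≤ w ∧ w ≤ b := by
  induction b, hab using Nat.le_induction with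
  | base => exact ⟨Walk.nil, by simp, by simp⟩
  | succ b hab ih =>
    obtain ⟨p, hp, hsupp⟩ := ih (by omega)
    have hadj : (pathG n).Adj b (b + 1) := pathG_adj_iff.mpr (by omega)
    refine ⟨p.concat hadj, hp.concat (fun h => by have := hsupp _ h; omega) hadj, ?_⟩
    intro w hw
    rw [Walk.support_concat, List.mem_append, List.mem_singleton] at hw
    rcases hw with hw | rfl
    · have := hsupp w hw; omega
    · omega

theorem padicValNat_two_pow_mul_odd (α : ℕ) {s : ℕ} (hs : Odd s) :
    padicValNat 2 (2 ^ α * s) = α := by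
  rw [padicValNat.mul (by positivity) (by rintro rfl; simp at hs), padicValNat.prime_pow,
    padicValNat.eq_zero_of_not_dvd hs.not_two_dvd_nat, add_zero]

theorem standardLabel_two_pow (k : ℕ) : standardLabel (2 ^ k) = k + 1 := by
  rw [standardLabel, padicValNat.prime_pow]

theorem standardLabel_le {i k : ℕ} (hi : i ≠ 0) (hik : i < 2 ^ k) : standardLabel i ≤ k := by
  have : 2 ^ padicValNat 2 i < 2 ^ k := (Nat.le_of_dvd (by omega) pow_padicValNat_dvd).trans_lt hik
  rw [standardLabel, Nat.add_one_le_iff]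
  exact (Nat.pow_lt_pow_iff_right (by norm_num)).mp this

theorem standardLabel_add_two_pow {m j : ℕ} (hm : m ≠ 0) (hmj : m < 2 ^ j) :
    standardLabel (m + 2 ^ j) = standardLabel m := by
  obtain ⟨α, s, hs, rfl⟩ := Nat.exists_eq_two_pow_mul_odd hm
  have hαj : α < j := by
    have : 2 ^ α < 2 ^ j := (Nat.le_mul_of_pos_right _ hs.pos).trans_lt hmj
    exact (Nat.pow_lt_pow_iff_right (by norm_num)).mp this
  have hsplit : 2 ^ α * s + 2 ^ j = 2 ^ α * (s + 2 ^ (j - α)) := by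
    rw [mul_add, ← pow_add, Nat.add_sub_cancel' hαj.le]
  have hodd : Odd (s + 2 ^ (j - α)) := hs.add_even ((Nat.even_pow' (by omega)).mpr even_two)
  rw [standardLabel, standardLabel, hsplit, padicValNat_two_pow_mul_odd _ hodd,
    padicValNat_two_pow_mul_odd _ hs]

def IsIntervalRanking (a b : ℕ) (f : ℕ → ℕ) : Prop :=
  ∀ u v, a ≤ u → u < v → v < b → f u = f v → ∃ w, u < w ∧ w < v ∧ f u < f w

theorem isRanking_pathG_iff {n k : ℕ} {f : ℕ → ℕ} :
    IsRanking (pathG n) k f ↔ (∀ v, 1 ≤ f v ∧ f v ≤ k) ∧ IsIntervalRanking 1 (n + 1) f := by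
  refine and_congr_right fun _ => ⟨fun hf u v hu huv hv hfuv => ?_, fun hf u v huv hfuv p _ => ?_⟩
  · obtain ⟨p, hp, hsupp⟩ := pathG_exists_isPath_support_subset (n := n) hu huv.le (by omega)
    obtain ⟨w, hw, hfw⟩ := hf u v huv.ne hfuv p hp
    have := hsupp w hw
    have : w ≠ u := by rintro rfl; omega
    have : w ≠ v := by rintro rfl; omega
    exact ⟨w, by omega, by omega, hfw⟩
  · have hu := pathG_walk_start_bounds p huv
    have hv := pathG_walk_start_bounds p.reverse huv.symm
    rcases huv.lt_or_gt with h | h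
    · obtain ⟨w, huw, hwv, hfw⟩ := hf u v hu.1 h (by omega) hfuv
      exact ⟨w, pathG_walk_mem_support p (by omega) (by omega), hfw⟩
    · obtain ⟨w, hvw, hwu, hfw⟩ := hf v u hv.1 h (by omega) hfuv.symm
      exact ⟨w, pathG_walk_mem_support p (by omega) (by omega), hfuv ▸ hfw⟩

theorem isIntervalRanking_standardLabel (b : ℕ) : IsIntervalRanking 1 b standardLabel := by
  intro u v hu huv _ hfuv
  obtain ⟨α, s, ⟨s, rfl⟩, rfl⟩ := Nat.exists_eq_two_pow_mul_odd (n := u) (by omega)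
  obtain ⟨β, t, ⟨t, rfl⟩, rfl⟩ := Nat.exists_eq_two_pow_mul_odd (n := v) (by omega)
  simp only [standardLabel, padicValNat_two_pow_mul_odd _ (odd_two_mul_add_one _),
    Nat.add_right_cancel_iff] at hfuv ⊢
  subst hfuv
  have hst : s < t := by
    have := Nat.lt_of_mul_lt_mul_left huv
    omega
  have hpos : 0 < 2 ^ α := by positivity
  refine ⟨2 ^ (α + 1) * (s + 1), ?_, ?_, ?_⟩
  · rw [pow_succ, mul_assoc]
    exact Nat.mul_lt_mul_of_pos_left (by omega) hpos
  · rw [pow_succ, mul_assoc]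
    exact Nat.mul_lt_mul_of_pos_left (by omega) hpos
  · rw [padicValNat.mul (by positivity) (by omega), padicValNat.prime_pow]
    omega

namespace IsIntervalRanking

variable {a b : ℕ} {f : ℕ → ℕ}

theorem mono (hf : IsIntervalRanking a b f) {a' b' : ℕ} (ha : a ≤ a') (hb : b' ≤ b) :
    IsIntervalRanking a' b' f :=
  fun u v hu huv hv => hf u v (ha.trans hu) huv (hv.trans_le hb)

theorem congr (hf : IsIntervalRanking a b f) {g : ℕ → ℕ} (hfg : Set.EqOn f g (Set.Ico a b)) :
    IsIntervalRanking a b g := by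
  intro u v hu huv hv hguv
  have hu' : u ∈ Set.Ico a b := ⟨hu, by omega⟩
  obtain ⟨w, huw, hwv, hfw⟩ :=
    hf u v hu huv hv (by rwa [hfg hu', hfg (show v ∈ Set.Ico a b from ⟨by omega, hv⟩)])
  rw [hfg hu', hfg (show w ∈ Set.Ico a b from ⟨by omega, by omega⟩)] at hfw
  exact ⟨w, huw, hwv, hfw⟩

theorem eq_of_apply_eq_of_le (hf : IsIntervalRanking a b f) {M : ℕ}
    (hle : ∀ i ∈ Set.Ico a b, f i ≤ M) {u v : ℕ} (hu : u ∈ Set.Ico a b) (hv : v ∈ Set.Ico a b)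
    (hfu : f u = M) (hfv : f v = M) : u = v := by
  obtain ⟨hu1, hu2⟩ := hu
  obtain ⟨hv1, hv2⟩ := hv
  by_contra huv
  rcases Ne.lt_or_gt huv with h | h
  · obtain ⟨w, huw, hwv, hfw⟩ := hf u v hu1 h hv2 (hfu.trans hfv.symm)
    have := hle w ⟨by omega, by omega⟩
    omega
  · obtain ⟨w, hvw, hwu, hfw⟩ := hf v u hv1 h hu2 (hfv.trans hfu.symm)
    have := hle w ⟨by omega, by omega⟩
    omega

theorem exists_add_le_apply {k m : ℕ} (hf : IsIntervalRanking a (a + 2 ^ k) f)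
    (hm : ∀ i ∈ Set.Ico a (a + 2 ^ k), m ≤ f i) :
    ∃ i ∈ Set.Ico a (a + 2 ^ k), m + k ≤ f i := by
  induction k generalizing a with
  | zero => exact ⟨a, ⟨le_rfl, by simp⟩, by simpa using hm a ⟨le_rfl, by simp⟩⟩
  | succ k ih =>
    have hpow : 2 ^ (k + 1) = 2 ^ k + 2 ^ k := by rw [pow_succ, mul_two]
    have hpos : 1 ≤ 2 ^ k := Nat.one_le_two_pow
    obtain ⟨i, ⟨hi1, hi2⟩, hfi⟩ := ih (hf.mono le_rfl (by omega))
      fun l ⟨hl1, hl2⟩ => hm l ⟨hl1, by omega⟩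
    obtain ⟨j, ⟨hj1, hj2⟩, hfj⟩ := ih (a := a + 2 ^ k) (hf.mono (by omega) (by omega))
      fun l ⟨hl1, hl2⟩ => hm l ⟨by omega, by omega⟩
    by_cases hfij : f i = f j
    · obtain ⟨w, hiw, hwj, hfw⟩ := hf i j hi1 (by omega) (by omega) hfij
      exact ⟨w, ⟨by omega, by omega⟩, by omega⟩
    · rcases Nat.lt_or_gt_of_ne hfij with h | h
      · exact ⟨j, ⟨by omega, by omega⟩, by omega⟩
      · exact ⟨i, ⟨by omega, by omega⟩, by omega⟩

theorem eq_standardLabel {k : ℕ}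
    (hf : IsIntervalRanking a (a + 2 ^ k - 1) f)
    (hlabel : ∀ i ∈ Set.Ico a (a + 2 ^ k - 1), f i ∈ Set.Icc 1 k) :
    ∀ i < 2 ^ k - 1, f (a + i) = standardLabel (i + 1) := by
  induction k generalizing a with
  | zero => simp
  | succ k ih =>
    have hpow : 2 ^ (k + 1) = 2 ^ k + 2 ^ k := by rw [pow_succ, mul_two]
    have hpos : 1 ≤ 2 ^ k := Nat.one_le_two_pow
    have htop : ∀ c, a ≤ c → c + 2 ^ k ≤ a + 2 ^ (k + 1) - 1 →
        ∃ i ∈ Set.Ico c (c + 2 ^ k), f i = k + 1 := by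
      intro c hac hc
      have hsub : ∀ i ∈ Set.Ico c (c + 2 ^ k), f i ∈ Set.Icc 1 (k + 1) :=
        fun i ⟨hi1, hi2⟩ => hlabel i ⟨by omega, by omega⟩
      obtain ⟨i, hi, hfi⟩ := (hf.mono hac hc).exists_add_le_apply fun i hi => (hsub i hi).1
      exact ⟨i, hi, le_antisymm (hsub i hi).2 (by omega)⟩
    have hunique : ∀ i j, i ∈ Set.Ico a (a + 2 ^ (k + 1) - 1) →
        j ∈ Set.Ico a (a + 2 ^ (k + 1) - 1) → f i = k + 1 → f j = k + 1 → i = j :=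
      fun i j hi hj => hf.eq_of_apply_eq_of_le (fun l hl => (hlabel l hl).2) hi hj
    obtain ⟨P, ⟨hP1, hP2⟩, hfP⟩ := htop a le_rfl (by omega)
    obtain ⟨Q, ⟨hQ1, hQ2⟩, hfQ⟩ := htop (a + 2 ^ k - 1) (by omega) (by omega)
    -- both halves of length `2 ^ k` carry the unique top label, so it sits at their overlap
    obtain rfl : P = Q := hunique P Q ⟨by omega, by omega⟩ ⟨by omega, by omega⟩ hfP hfQ
    have hlow : ∀ c, a ≤ c → c + 2 ^ k - 1 ≤ a + 2 ^ (k + 1) - 1 → P ∉ Set.Ico c (c + 2 ^ k - 1) →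
        ∀ i ∈ Set.Ico c (c + 2 ^ k - 1), f i ∈ Set.Icc 1 k := by
      intro c hac hc hP i ⟨hi1, hi2⟩
      have hne : i ≠ P := by rintro rfl; exact hP ⟨hi1, hi2⟩
      have := hlabel i ⟨by omega, by omega⟩
      refine ⟨this.1, Nat.le_of_lt_succ (lt_of_le_of_ne this.2 fun h => hne ?_)⟩
      exact hunique i P ⟨by omega, by omega⟩ ⟨by omega, by omega⟩ h hfP
    have hL := ih (hf.mono le_rfl (by omega)) (hlow a le_rfl (by omega) fun ⟨h1, h2⟩ => by omega)
    have hR := ih (a := a + 2 ^ k) (hf.mono (by omega) (by omega))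
      (hlow _ (by omega) (by omega) fun ⟨h1, h2⟩ => by omega)
    intro i hi
    rcases lt_trichotomy i (2 ^ k - 1) with h | rfl | h
    · exact hL i h
    · rw [Nat.sub_add_cancel hpos, standardLabel_two_pow, ← hfP]
      congr 1
      omega
    · obtain ⟨j, rfl⟩ : ∃ j, i = 2 ^ k + j := ⟨i - 2 ^ k, by omega⟩
      rw [← add_assoc, hR j (by omega), show 2 ^ k + j + 1 = j + 1 + 2 ^ k by ring,
        standardLabel_add_two_pow (by omega) (by omega)]

end IsIntervalRanking

theorem rankNumber_eq_of_isRanking {V : Type*} {G : SimpleGraph V} {k : ℕ} {f : V → ℕ}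
    (hf : IsRanking G k f) (hmin : ∀ m g, IsRanking G m g → k ≤ m) : rankNumber G = k :=
  le_antisymm (Nat.sInf_le ⟨f, hf⟩) (le_csInf ⟨k, f, hf⟩ fun m ⟨g, hg⟩ => hmin m g hg)

theorem succ_le_of_isRanking_pathG {n m j : ℕ} {g : ℕ → ℕ} (hn : 2 ^ j ≤ n)
    (hg : IsRanking (pathG n) m g) : j + 1 ≤ m := by
  obtain ⟨hlabel, hrank⟩ := isRanking_pathG_iff.mp hg
  obtain ⟨i, -, hi⟩ := (hrank.mono le_rfl (by omega : 1 + 2 ^ j ≤ n + 1)).exists_add_le_apply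
    fun i _ => (hlabel i).1
  have := (hlabel i).2
  omega

theorem isRanking_pathG_standardLabel {k : ℕ} (hk : 1 ≤ k) :
    IsRanking (pathG (2 ^ k - 1)) k
      (fun i => if 1 ≤ i ∧ i ≤ 2 ^ k - 1 then standardLabel i else 1) := by
  have hpos : 1 ≤ 2 ^ k := Nat.one_le_two_pow
  refine isRanking_pathG_iff.mpr ⟨fun v => ?_, ?_⟩
  · split_ifs with hv
    · exact ⟨Nat.le_add_left 1 _, standardLabel_le (by omega) (by omega)⟩
    · exact ⟨le_rfl, hk⟩
  · refine (isIntervalRanking_standardLabel _).congr fun i ⟨hi1, hi2⟩ => ?_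
    simp only [if_pos (⟨hi1, by omega⟩ : 1 ≤ i ∧ i ≤ 2 ^ k - 1)]

theorem eq_standardLabel_of_isRanking_pathG {k : ℕ} {f : ℕ → ℕ}
    (hf : IsRanking (pathG (2 ^ k - 1)) k f) {i : ℕ} (hi : 1 ≤ i) (hik : i ≤ 2 ^ k - 1) :
    f i = standardLabel i := by
  have hpos : 1 ≤ 2 ^ k := Nat.one_le_two_pow
  obtain ⟨hlabel, hrank⟩ := isRanking_pathG_iff.mp hf
  have := (hrank.mono le_rfl (by omega : 1 + 2 ^ k - 1 ≤ 2 ^ k - 1 + 1)).eq_standardLabel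
    (fun j _ => hlabel j) (i - 1) (by omega)
  rwa [Nat.add_sub_cancel' hi, Nat.sub_add_cancel hi] at this

/-- For every integer `k ≥ 1`, the rank number of the path `P_{2^k - 1}`
equals `k`, and the standard ranking is the unique `k`-ranking of `P_{2^k - 1}`. -/
theorem path_rankNumber_eq_and_unique_ranking (k : ℕ) (hk : 1 ≤ k) :
    rankNumber (pathG (2 ^ k - 1)) = k ∧
    IsRanking (pathG (2 ^ k - 1)) k
      (fun i => if 1 ≤ i ∧ i ≤ 2 ^ k - 1 then standardLabel i else 1) ∧
    ∀ f : ℕ → ℕ, IsRanking (pathG (2 ^ k - 1)) k f →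
      ∀ i, 1 ≤ i → i ≤ 2 ^ k - 1 → f i = standardLabel i := by
  have hstd := isRanking_pathG_standardLabel hk
  refine ⟨rankNumber_eq_of_isRanking hstd fun m g hg => ?_, hstd,
    fun f hf i hi hik => eq_standardLabel_of_isRanking_pathG hf hi hik⟩
  obtain ⟨j, rfl⟩ : ∃ j, k = j + 1 := ⟨k - 1, by omega⟩
  have : 2 ^ (j + 1) = 2 ^ j + 2 ^ j := by rw [pow_succ, mul_two]
  exact succ_le_of_isRanking_pathG (j := j) (by have := @Nat.one_le_two_pow j; omega) hg
end

section
/- Let f be the standard ranking of P_{2^k−1}, let m be an odd integer with 1 ≤ m < 2^k−1, let t = ⌊log₂ m⌋ with t ≥ 2, let (α_t α_{t−1} … α_1 α_0)_2 be the binary representation of m, and for s = 1,…,t−1 set Ω(s) = m + 1 + Σ_{i=1}^{s}(1−α_i)2^i. Then for every s ∈ {1,…,t−1} and every index j with m < j < Ω(s), one has f(v_j) < f(v_{Ω(s)}). -/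
open SimpleGraph

/-- `Ω(s) = m + 1 + ∑_{i=1}^{s} (1 - αᵢ) 2^i`, where `(α_t α_{t-1} … α_1 α_0)₂` is the
binary representation of `m`. -/
def OmegaP (m s : ℕ) : ℕ :=
  m + 1 + ∑ i ∈ Finset.Icc 1 s, (if m.testBit i then 0 else 1) * 2 ^ i


/-!
`Ω(s)` is the least multiple of `2^(s+1)` exceeding the odd number `m`: adding `(1 - αᵢ) 2^i`
for `i = 1, …, s` to `m + 1` fills in the zero bits of `m` one at a time, each time carrying
into bit `i + 1`. So `2^(s+1)` divides `Ω(s)`, while no `j` strictly between `m` and `Ω(s)` is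
divisible by `2^(s+1)`, and the labels compare accordingly.
-/

lemma OmegaP_succ (m s : ℕ) :
    OmegaP m (s + 1) = OmegaP m s + (if m.testBit (s + 1) then 0 else 1) * 2 ^ (s + 1) := by
  rw [OmegaP, OmegaP, Finset.sum_Icc_succ_top (by omega)]
  ring

lemma OmegaP_eq_of_odd {m : ℕ} (hodd : Odd m) (s : ℕ) :
    OmegaP m s = (m / 2 ^ (s + 1) + 1) * 2 ^ (s + 1) := by
  induction s with
  | zero =>
    obtain ⟨c, rfl⟩ := hodd
    simp only [OmegaP, zero_lt_one, Finset.Icc_eq_empty_of_lt, Finset.sum_empty]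
    omega
  | succ s ih =>
    set q := m / 2 ^ (s + 1)
    have hdiv : m / 2 ^ (s + 1 + 1) = q / 2 := by rw [pow_succ, Nat.div_div_eq_div_mul]
    have hcarry : q + 1 + (if m.testBit (s + 1) then 0 else 1) = 2 * (q / 2 + 1) := by
      rw [Nat.testBit_eq_decide_div_mod_eq]
      split_ifs with hbit <;> simp only [decide_eq_true_eq] at hbit <;> omega
    calc OmegaP m (s + 1)
        = (q + 1 + (if m.testBit (s + 1) then 0 else 1)) * 2 ^ (s + 1) := by
          rw [OmegaP_succ, ih]; ring
      _ = (m / 2 ^ (s + 1 + 1) + 1) * 2 ^ (s + 1 + 1) := by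
          rw [hcarry, hdiv, pow_succ]; ring

lemma padicValNat_lt_of_lt_of_lt_next_multiple {p n m j : ℕ} [Fact p.Prime] (hmj : m < j)
    (hj : j < (m / p ^ n + 1) * p ^ n) : padicValNat p j < n := by
  by_contra! hle
  have hdvd : p ^ n ∣ j := (padicValNat_dvd_iff_le (by omega)).mpr hle
  have hquot : m / p ^ n < j / p ^ n := Nat.div_lt_div_of_lt_of_dvd hdvd hmj
  have hnext : (m / p ^ n + 1) * p ^ n ≤ j :=
    calc (m / p ^ n + 1) * p ^ n ≤ j / p ^ n * p ^ n := Nat.mul_le_mul_right _ hquot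
      _ = j := Nat.div_mul_cancel hdvd
  exact (hj.trans_le hnext).false

theorem standardLabel_lt_of_lt_Omega_general (m : ℕ) (hodd : Odd m) :
    ∀ s, 1 ≤ s → s ≤ Nat.log 2 m - 1 →
      ∀ j, m < j → j < OmegaP m s →
        standardLabel j < standardLabel (OmegaP m s) := by
  intro s _ _ j hmj hjΩ
  rw [OmegaP_eq_of_odd hodd] at hjΩ ⊢
  have hj : padicValNat 2 j < s + 1 := padicValNat_lt_of_lt_of_lt_next_multiple hmj hjΩ
  have hΩ : padicValNat 2 ((m / 2 ^ (s + 1) + 1) * 2 ^ (s + 1)) =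
      padicValNat 2 (m / 2 ^ (s + 1) + 1) + (s + 1) := by
    rw [padicValNat.mul (Nat.succ_ne_zero _) (by positivity), padicValNat.prime_pow]
  simp only [standardLabel]
  omega

/-- for the standard ranking `f` of `P_{2^k - 1}`, an odd `m` with
`1 ≤ m < 2^k - 1` and `t = ⌊log₂ m⌋ ≥ 2`, for every `s ∈ {1, …, t-1}` and every
`j` with `m < j < Ω(s)` one has `f(v_j) < f(v_{Ω(s)})`. -/
theorem standardLabel_lt_of_lt_Omega (k m : ℕ) (hodd : Odd m) (hm1 : 1 ≤ m)
    (hm2 : m < 2 ^ k - 1) (ht : 2 ≤ Nat.log 2 m) :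
    ∀ s, 1 ≤ s → s ≤ Nat.log 2 m - 1 →
      ∀ j, m < j → j < OmegaP m s →
        standardLabel j < standardLabel (OmegaP m s) :=
  standardLabel_lt_of_lt_Omega_general m hodd
end

section
/- Let n > 3 and 3 < j ≤ n, and let f be the standard ranking of P_{2^n−1} with A_j = {v ∈ V(P_{2^n−1}) : f(v) ≥ j}. Then the graph P_{2^n−1} with the vertices of A_j deleted has exactly 2^{n−j+1} connected components, each of which is a path on 2^{j−1}−1 vertices. -/
open SimpleGraph

/-!
Vertex `i` has standard label `< j` exactly when `2^(j-1) ∤ i`, so deleting `A_j` removes the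
multiples of `m = 2^(j-1)` from a path with `m · 2^(n-j+1) - 1` vertices. No edge of what remains
crosses a multiple of `m`, so `x / m` is constant on components, and the vertices with
`x / m = q` form the block `q m + 1, …, q m + (m - 1)`, a copy of `P_{m-1}`.
-/

def nonMultiples (m N : ℕ) : Set ℕ := {x | 1 ≤ x ∧ x ≤ N ∧ ¬ m ∣ x}

abbrev pathMinusMultiples (m N : ℕ) : SimpleGraph (nonMultiples m N) :=
  (pathG N).induce (nonMultiples m N)

namespace pathMinusMultiples

variable {m N K : ℕ}

theorem adj_iff {x y : nonMultiples m N} :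
    (pathMinusMultiples m N).Adj x y ↔ (y : ℕ) = x + 1 ∨ (x : ℕ) = y + 1 := by
  obtain ⟨x, hx1, hxN, -⟩ := x
  obtain ⟨y, hy1, hyN, -⟩ := y
  simp only [comap_adj, Function.Embedding.coe_subtype, pathG, fromRel_adj]
  omega

theorem div_eq_of_adj {x y : nonMultiples m N} (h : (pathMinusMultiples m N).Adj x y) :
    (x : ℕ) / m = (y : ℕ) / m := by
  rcases adj_iff.1 h with hxy | hxy
  · rw [hxy, Nat.succ_div_of_not_dvd (hxy ▸ y.2.2.2)]
  · rw [hxy, Nat.succ_div_of_not_dvd (hxy ▸ x.2.2.2)]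

theorem div_eq_of_reachable {x y : nonMultiples m N}
    (h : (pathMinusMultiples m N).Reachable x y) : (x : ℕ) / m = (y : ℕ) / m := by
  obtain ⟨p⟩ := h
  induction p with
  | nil => rfl
  | cons h _ ih => exact (div_eq_of_adj h).trans ih

theorem div_lt (hN : N + 1 = K * m) (x : nonMultiples m N) : (x : ℕ) / m < K :=
  Nat.div_lt_of_lt_mul (by have := x.2.2.1; rw [mul_comm]; omega)

theorem mul_add_mem_nonMultiples (hN : N + 1 = K * m) {q r : ℕ} (hq : q < K) (hr : 0 < r)
    (hrm : r < m) :
    m * q + r ∈ nonMultiples m N := by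
  have hqK : m * (q + 1) ≤ m * K := Nat.mul_le_mul_left m hq
  refine ⟨by omega, by rw [mul_comm K m] at hN; rw [mul_add] at hqK; omega, ?_⟩
  rw [Nat.dvd_iff_mod_eq_zero, Nat.mul_add_mod, Nat.mod_eq_of_lt hrm]
  omega

def blockEmbedding (hN : N + 1 = K * m) (q : Fin K) :
    pathGraph (m - 1) ↪g pathMinusMultiples m N where
  toFun i := ⟨m * q + (i + 1), mul_add_mem_nonMultiples hN q.2 (Nat.succ_pos _) (by omega)⟩
  inj' i i' h := Fin.ext (by simpa using congrArg Subtype.val h)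
  map_rel_iff' {i i'} := by
    rw [adj_iff, pathGraph_adj]
    change m * q + (i' + 1) = m * q + (i + 1) + 1 ∨
      m * q + (i + 1) = m * q + (i' + 1) + 1 ↔ _
    omega

@[simp]
theorem blockEmbedding_apply (hN : N + 1 = K * m) (q : Fin K) (i : Fin (m - 1)) :
    (blockEmbedding hN q i : ℕ) = m * q + (i + 1) := rfl

theorem mem_range_blockEmbedding_iff (hm : 0 < m) (hN : N + 1 = K * m) (q : Fin K)
    (x : nonMultiples m N) :
    x ∈ Set.range (blockEmbedding hN q) ↔ (x : ℕ) / m = q := by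
  constructor
  · rintro ⟨i, rfl⟩
    have := i.2
    rw [blockEmbedding_apply, Nat.mul_add_div hm, Nat.div_eq_of_lt (by omega), add_zero]
  · intro h
    have hmod : (x : ℕ) % m ≠ 0 := fun h0 => x.2.2.2 (Nat.dvd_of_mod_eq_zero h0)
    have hlt := Nat.mod_lt (x : ℕ) hm
    refine ⟨⟨(x : ℕ) % m - 1, by omega⟩, Subtype.ext ?_⟩
    have := Nat.div_add_mod (x : ℕ) m
    simp only [blockEmbedding_apply, ← h]
    omega

theorem reachable_iff_div_eq (hm : 0 < m) (hN : N + 1 = K * m) {x y : nonMultiples m N} :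
    (pathMinusMultiples m N).Reachable x y ↔ (x : ℕ) / m = (y : ℕ) / m := by
  refine ⟨div_eq_of_reachable, fun h => ?_⟩
  let q : Fin K := ⟨(x : ℕ) / m, div_lt hN x⟩
  obtain ⟨i, hx⟩ := (mem_range_blockEmbedding_iff hm hN q x).2 rfl
  obtain ⟨i', hy⟩ := (mem_range_blockEmbedding_iff hm hN q y).2 h.symm
  rw [← hx, ← hy]
  exact (pathGraph_preconnected _ i i').map (blockEmbedding hN q).toHom

theorem supp_eq_range_blockEmbedding (hm : 0 < m) (hN : N + 1 = K * m)
    (x : nonMultiples m N) :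
    ((pathMinusMultiples m N).connectedComponentMk x).supp =
      Set.range (blockEmbedding hN ⟨(x : ℕ) / m, div_lt hN x⟩) := by
  ext y
  rw [ConnectedComponent.mem_supp_iff, ConnectedComponent.eq, reachable_iff_div_eq hm hN,
    mem_range_blockEmbedding_iff hm hN]

theorem card_connectedComponent (hm : 1 < m) (hN : N + 1 = K * m) :
    Nat.card (pathMinusMultiples m N).ConnectedComponent = K := by
  let block : (pathMinusMultiples m N).ConnectedComponent → Fin K :=
    ConnectedComponent.lift (fun x => ⟨(x : ℕ) / m, div_lt hN x⟩)
      fun _ _ p _ => Fin.ext (div_eq_of_reachable ⟨p⟩)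
  have hinj : block.Injective := by
    refine ConnectedComponent.ind₂ fun x y h => ConnectedComponent.sound ?_
    exact (reachable_iff_div_eq (by omega) hN).2 (Fin.ext_iff.1 h)
  have hsurj : block.Surjective := fun q =>
    ⟨(pathMinusMultiples m N).connectedComponentMk (blockEmbedding hN q ⟨0, by omega⟩),
      Fin.ext ((mem_range_blockEmbedding_iff (by omega) hN q _).1 ⟨_, rfl⟩)⟩
  rw [Nat.card_eq_of_bijective block ⟨hinj, hsurj⟩, Nat.card_eq_fintype_card, Fintype.card_fin]

theorem nonempty_iso_pathGraph (hm : 0 < m) (hN : N + 1 = K * m)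
    (c : (pathMinusMultiples m N).ConnectedComponent) :
    Nonempty ((pathMinusMultiples m N).induce c.supp ≃g pathGraph (m - 1)) := by
  induction c using ConnectedComponent.ind with
  | h x =>
    rw [supp_eq_range_blockEmbedding hm hN]
    exact ⟨(blockEmbedding hN _).isoInduceRange.symm⟩

end pathMinusMultiples

theorem standardLabel_lt_iff_not_dvd {x j : ℕ} (hx : x ≠ 0) (hj : 0 < j) :
    standardLabel x < j ↔ ¬ 2 ^ (j - 1) ∣ x := by
  rw [standardLabel, padicValNat_dvd_iff_le hx]
  omega

theorem deleted_path_components_general (n j : ℕ) (hj1 : 3 < j) (hj2 : j ≤ n) :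
    Nat.card ((pathG (2 ^ n - 1)).induce
        {x : ℕ | 1 ≤ x ∧ x ≤ 2 ^ n - 1 ∧ standardLabel x < j}).ConnectedComponent =
      2 ^ (n - j + 1) ∧
    ∀ c : ((pathG (2 ^ n - 1)).induce
        {x : ℕ | 1 ≤ x ∧ x ≤ 2 ^ n - 1 ∧ standardLabel x < j}).ConnectedComponent,
      Nonempty ((((pathG (2 ^ n - 1)).induce
          {x : ℕ | 1 ≤ x ∧ x ≤ 2 ^ n - 1 ∧ standardLabel x < j}).induce c.supp) ≃g
        SimpleGraph.pathGraph (2 ^ (j - 1) - 1)) := by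
  have hblocks : 2 ^ n - 1 + 1 = 2 ^ (n - j + 1) * 2 ^ (j - 1) := by
    rw [← pow_add, show n - j + 1 + (j - 1) = n by omega, Nat.sub_add_cancel Nat.one_le_two_pow]
  have hset : {x : ℕ | 1 ≤ x ∧ x ≤ 2 ^ n - 1 ∧ standardLabel x < j} =
      nonMultiples (2 ^ (j - 1)) (2 ^ n - 1) := by
    ext x
    simp only [nonMultiples, Set.mem_ofPred_eq, and_congr_right_iff]
    exact fun hx _ => standardLabel_lt_iff_not_dvd (by omega) (by omega)
  have hm : 1 < 2 ^ (j - 1) := Nat.one_lt_two_pow (by omega)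
  rw [hset]
  exact ⟨pathMinusMultiples.card_connectedComponent hm hblocks,
    pathMinusMultiples.nonempty_iso_pathGraph (by omega) hblocks⟩

/-- for `n > 3` and `3 < j ≤ n`, the graph obtained from `P_{2^n - 1}` by
deleting the vertices of `A_j = {v : f(v) ≥ j}` (`f` the standard ranking) has exactly
`2^{n-j+1}` connected components, each of which is a path on `2^{j-1} - 1` vertices. -/
theorem deleted_path_components (n j : ℕ) (hn : 3 < n) (hj1 : 3 < j) (hj2 : j ≤ n) :
    Nat.card ((pathG (2 ^ n - 1)).induce
        {x : ℕ | 1 ≤ x ∧ x ≤ 2 ^ n - 1 ∧ standardLabel x < j}).ConnectedComponent =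
      2 ^ (n - j + 1) ∧
    ∀ c : ((pathG (2 ^ n - 1)).induce
        {x : ℕ | 1 ≤ x ∧ x ≤ 2 ^ n - 1 ∧ standardLabel x < j}).ConnectedComponent,
      Nonempty ((((pathG (2 ^ n - 1)).induce
          {x : ℕ | 1 ≤ x ∧ x ≤ 2 ^ n - 1 ∧ standardLabel x < j}).induce c.supp) ≃g
        SimpleGraph.pathGraph (2 ^ (j - 1) - 1)) :=
  deleted_path_components_general n j hj1 hj2
end

section
/- Let m ≥ 2 and let c = v_{2^{m−1}} be the unique vertex of P_{2^m−1} receiving label m in the standard ranking (the middle vertex). Let E(c) be the set of all pairs {c, u} with u ∈ V(P_{2^m−1}) not adjacent to c. Then χ_r(P_{2^m−1} ∪ E(c)) = χ_r(P_{2^m−1}) = m; in particular every edge of E(c) is good for P_{2^m−1}. -/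
open SimpleGraph

/-- An edge `e ∉ E(G)` is good for `G` if adding it does not change the rank number. -/
def goodEdge {V : Type*} (G : SimpleGraph V) (e : Sym2 V) : Prop :=
  rankNumber (G ⊔ SimpleGraph.fromEdgeSet {e}) = rankNumber G

/-! The lower bound `m` holds already for the path: by induction on `j`, every block of
`2^j - 1` consecutive vertices of a ranked path carries a label `≥ j`, because the two halves
each carry a label `≥ j - 1`, and if both equal `j - 1` the straight path between them must
contain a larger label.

For the upper bound, the standard ranking remains a ranking after joining the centre
`c = 2^(m-1)` to every vertex. A path between two vertices of equal label `α + 1` (less than `m`,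
since only `c` has label `m`) either passes through `c`, or lies in the path graph and so runs
through every vertex in between; among these there is one of larger 2-adic valuation, since between
`2^α a < 2^α b` with `a, b` odd lies `2^α (a + 1)`. So every graph between `P_{2^m-1}` and this
augmented graph has rank number `m`. -/

def pathWithStar (n c : ℕ) : SimpleGraph ℕ :=
  pathG n ⊔ fromEdgeSet {e | ∃ u, 1 ≤ u ∧ u ≤ n ∧ e = s(c, u)}

/-- `IsRanking` constrains the labels of all natural numbers, not only of the path's vertices. -/
def cappedStandardLabel (m v : ℕ) : ℕ := min (standardLabel v) m

lemma pathG_adj {n a b : ℕ} :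
    (pathG n).Adj a b ↔
      (1 ≤ a ∧ b = a + 1 ∧ b ≤ n) ∨ (1 ≤ b ∧ a = b + 1 ∧ a ≤ n) := by
  simp only [pathG, fromRel_adj]
  omega

lemma mem_support_pathG_of_between {n u v w : ℕ} (p : (pathG n).Walk u v)
    (hw : min u v ≤ w ∧ w ≤ max u v) : w ∈ p.support := by
  induction p with
  | nil => simp only [Walk.support_nil, List.mem_singleton]; omega
  | @cons a b _ hab _ ih =>
    rw [Walk.support_cons, List.mem_cons]
    rw [pathG_adj] at hab
    by_cases hwa : w = a
    · exact Or.inl hwa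
    · exact Or.inr (ih (by omega))

lemma exists_isPath_pathG {n u v : ℕ} (hu : 1 ≤ u) (huv : u ≤ v) (hv : v ≤ n) :
    ∃ p : (pathG n).Walk u v, p.IsPath ∧ ∀ w ∈ p.support, u ≤ w ∧ w ≤ v := by
  induction v, huv using Nat.le_induction with
  | base => exact ⟨.nil, .nil, by simp⟩
  | succ v huv ih =>
    obtain ⟨p, hp, hsupp⟩ := ih (by omega)
    have hadj : (pathG n).Adj v (v + 1) := pathG_adj.2 (Or.inl ⟨by omega, rfl, hv⟩)
    refine ⟨p.concat hadj, hp.concat (fun h => by have := hsupp _ h; omega) hadj, ?_⟩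
    intro w hw
    rw [Walk.support_concat, List.mem_append, List.mem_singleton] at hw
    rcases hw with hw | rfl
    · have := hsupp w hw; omega
    · omega

lemma exists_padicValNat_lt_between {u v : ℕ} (hu : 0 < u) (huv : u < v)
    (hval : padicValNat 2 u = padicValNat 2 v) :
    ∃ w, u < w ∧ w < v ∧ padicValNat 2 u < padicValNat 2 w := by
  have hodd : ∀ x c, x ≠ 0 → x = 2 ^ padicValNat 2 x * c → ¬ 2 ∣ c := by
    intro x c hx hc h2
    apply pow_succ_padicValNat_not_dvd (p := 2) hx
    rw [pow_succ]
    nth_rewrite 2 [hc]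
    exact mul_dvd_mul_left _ h2
  set α := padicValNat 2 u
  obtain ⟨a, ha⟩ : 2 ^ α ∣ u := pow_padicValNat_dvd
  obtain ⟨b, hb⟩ : 2 ^ α ∣ v := hval ▸ pow_padicValNat_dvd (p := 2)
  have hab : a < b := Nat.lt_of_mul_lt_mul_left (ha ▸ hb ▸ huv)
  have ha2 := hodd u a hu.ne' ha
  have hb2 := hodd v b (by omega) (hval ▸ hb)
  have hpos : 0 < 2 ^ α := by positivity
  refine ⟨2 ^ α * (a + 1), ?_, ?_, ?_⟩
  · rw [ha]; exact Nat.mul_lt_mul_of_pos_left (by omega) hpos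
  · rw [hb]; exact Nat.mul_lt_mul_of_pos_left (by omega) hpos
  · obtain ⟨c, hc⟩ : 2 ∣ a + 1 := by omega
    refine (padicValNat_dvd_iff_le (by positivity)).mp ⟨c, ?_⟩
    rw [hc, pow_succ, mul_assoc]

lemma exists_mem_support_padicValNat_lt {n u v : ℕ} (p : (pathG n).Walk u v) (hu : 0 < u)
    (hv : 0 < v) (hne : u ≠ v) (hval : padicValNat 2 u = padicValNat 2 v) :
    ∃ w ∈ p.support, min u v < w ∧ w < max u v ∧ padicValNat 2 u < padicValNat 2 w := by
  rcases hne.lt_or_gt with h | h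
  · obtain ⟨w, h1, h2, h3⟩ := exists_padicValNat_lt_between hu h hval
    exact ⟨w, mem_support_pathG_of_between p (by omega), by omega, by omega, h3⟩
  · obtain ⟨w, h1, h2, h3⟩ := exists_padicValNat_lt_between hv h hval.symm
    exact ⟨w, mem_support_pathG_of_between p (by omega), by omega, by omega, hval ▸ h3⟩

lemma padicValNat_two_lt {v m : ℕ} (hv : 0 < v) (hlt : v < 2 ^ m) : padicValNat 2 v < m :=
  (padicValNat_le_nat_log v).trans_lt (Nat.log_lt_of_lt_pow hv.ne' hlt)

lemma eq_two_pow_of_padicValNat_eq {v k : ℕ} (hv : 0 < v) (hlt : v < 2 ^ (k + 1))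
    (hval : padicValNat 2 v = k) : v = 2 ^ k := by
  obtain ⟨t, rfl⟩ : 2 ^ k ∣ v := hval ▸ pow_padicValNat_dvd
  have ht2 : t < 2 := Nat.lt_of_mul_lt_mul_left (by rwa [pow_succ] at hlt)
  have ht0 : t ≠ 0 := by rintro rfl; simp at hv
  obtain rfl : t = 1 := by omega
  exact mul_one _

lemma SimpleGraph.Walk.exists_support_eq_of_notMem {V : Type*} {G : SimpleGraph V}
    {S : Set (Sym2 V)} {c : V} (hS : ∀ e ∈ S, c ∈ e) {u v : V}
    (p : (G ⊔ fromEdgeSet S).Walk u v) (hc : c ∉ p.support) :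
    ∃ q : G.Walk u v, q.support = p.support := by
  refine ⟨p.transfer G fun e he => ?_, Walk.support_transfer _ _⟩
  have := p.edges_subset_edgeSet he
  rw [edgeSet_sup, edgeSet_fromEdgeSet] at this
  rcases this with hG | ⟨hS', -⟩
  · exact hG
  · exact absurd (Walk.mem_support_of_mem_edges he (hS e hS')) hc

lemma pathWithStar_adj_bounds {n c a b : ℕ} (hc : 1 ≤ c ∧ c ≤ n)
    (h : (pathWithStar n c).Adj a b) : 1 ≤ a ∧ a ≤ n := by
  rcases h with h | ⟨⟨u, hu1, hun, he⟩, -⟩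
  · rw [pathG_adj] at h; omega
  · rcases Sym2.eq_iff.mp he with ⟨rfl, -⟩ | ⟨rfl, -⟩ <;> omega

namespace IsRanking

variable {V : Type*} {G H : SimpleGraph V} {k : ℕ} {f : V → ℕ}

lemma of_le (h : IsRanking H k f) (hGH : G ≤ H) : IsRanking G k f := by
  refine ⟨h.1, fun u v hne hfe p hp => ?_⟩
  obtain ⟨w, hw, hlt⟩ := h.2 u v hne hfe (p.mapLe hGH) (hp.mapLe hGH)
  exact ⟨w, by simpa [Walk.support_map] using hw, hlt⟩

lemma exists_le_label_pathG {n : ℕ} {f : ℕ → ℕ} (hf : IsRanking (pathG n) k f) (j : ℕ)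
    {a : ℕ} (ha : 1 ≤ a) (han : a + 2 ^ (j + 1) ≤ n + 2) :
    ∃ w, a ≤ w ∧ w + 2 ≤ a + 2 ^ (j + 1) ∧ j + 1 ≤ f w := by
  induction j generalizing a with
  | zero => exact ⟨a, le_rfl, by norm_num, (hf.1 a).1⟩
  | succ j ih =>
    have hpow : 2 ^ (j + 1 + 1) = 2 ^ (j + 1) + 2 ^ (j + 1) := by rw [pow_succ]; omega
    have hpos : 0 < 2 ^ (j + 1) := by positivity
    obtain ⟨u, hu1, hu2, hu3⟩ := ih ha (by omega)
    obtain ⟨v, hv1, hv2, hv3⟩ := ih (a := a + 2 ^ (j + 1)) (by omega) (by omega)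
    by_cases hfu : j + 2 ≤ f u
    · exact ⟨u, hu1, by omega, hfu⟩
    by_cases hfv : j + 2 ≤ f v
    · exact ⟨v, by omega, by omega, hfv⟩
    obtain ⟨p, hp, hsupp⟩ := exists_isPath_pathG (n := n) (u := u) (v := v)
      (by omega) (by omega) (by omega)
    obtain ⟨w, hw, hlt⟩ := hf.2 u v (by omega) (by omega) p hp
    have := hsupp w hw
    exact ⟨w, by omega, by omega, by omega⟩

lemma le_of_pathG {n j : ℕ} {f : ℕ → ℕ} (hf : IsRanking (pathG n) k f)
    (hj : 2 ^ j ≤ n + 1) : j ≤ k := by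
  cases j with
  | zero => exact Nat.zero_le _
  | succ j =>
    obtain ⟨w, -, -, hw⟩ := hf.exists_le_label_pathG j le_rfl (by omega)
    exact hw.trans (hf.1 w).2

end IsRanking

lemma rankNumber_eq {V : Type*} {G : SimpleGraph V} {k : ℕ} {f : V → ℕ}
    (hf : IsRanking G k f) (hmin : ∀ j g, IsRanking G j g → k ≤ j) : rankNumber G = k :=
  le_antisymm (Nat.sInf_le ⟨f, hf⟩) (le_csInf ⟨k, f, hf⟩ fun j ⟨g, hg⟩ => hmin j g hg)

lemma isRanking_pathWithStar {m : ℕ} (hm : 1 ≤ m) :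
    IsRanking (pathWithStar (2 ^ m - 1) (2 ^ (m - 1))) m (cappedStandardLabel m) := by
  have hpow : 2 ^ (m - 1) * 2 = 2 ^ m := by rw [← pow_succ, Nat.sub_add_cancel hm]
  have hc : 1 ≤ 2 ^ (m - 1) ∧ 2 ^ (m - 1) ≤ 2 ^ m - 1 := ⟨Nat.one_le_two_pow, by omega⟩
  have hval : ∀ v, 1 ≤ v → v ≤ 2 ^ m - 1 → padicValNat 2 v < m := fun v h1 h2 =>
    padicValNat_two_lt h1 (by omega)
  have hlabel : ∀ v, 1 ≤ v → v ≤ 2 ^ m - 1 →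
      cappedStandardLabel m v = padicValNat 2 v + 1 := fun v h1 h2 =>
    min_eq_left (by have := hval v h1 h2; unfold standardLabel; omega)
  refine ⟨fun v => ⟨le_min (by unfold standardLabel; omega) hm, min_le_right _ _⟩,
    fun u v hne huv p _ => ?_⟩
  obtain ⟨hu1, hun⟩ := pathWithStar_adj_bounds hc (p.adj_snd (Walk.not_nil_of_ne hne))
  obtain ⟨hv1, hvn⟩ :=
    pathWithStar_adj_bounds hc (p.reverse.adj_snd (Walk.not_nil_of_ne hne.symm))
  rw [hlabel u hu1 hun, hlabel v hv1 hvn] at huv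
  rw [hlabel u hu1 hun]
  by_cases hcp : 2 ^ (m - 1) ∈ p.support
  · have hu : padicValNat 2 u ≠ m - 1 := fun h =>
      hne ((eq_two_pow_of_padicValNat_eq hu1 (by rw [pow_succ]; omega) h).trans
        (eq_two_pow_of_padicValNat_eq hv1 (by rw [pow_succ]; omega) (by omega)).symm)
    refine ⟨_, hcp, ?_⟩
    rw [hlabel _ hc.1 hc.2, padicValNat.prime_pow]
    have := hval u hu1 hun
    omega
  · obtain ⟨q, hq⟩ := p.exists_support_eq_of_notMem
      (by rintro e ⟨x, -, -, rfl⟩; exact Sym2.mem_mk_left _ x) hcp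
    obtain ⟨w, hw, hw1, hw2, hlt⟩ :=
      exists_mem_support_padicValNat_lt q hu1 hv1 hne (by omega)
    refine ⟨w, hq ▸ hw, ?_⟩
    rw [hlabel w (by omega) (by omega)]
    omega

lemma rankNumber_eq_of_le_pathWithStar {m : ℕ} (hm : 1 ≤ m) {H : SimpleGraph ℕ}
    (hpath : pathG (2 ^ m - 1) ≤ H) (hstar : H ≤ pathWithStar (2 ^ m - 1) (2 ^ (m - 1))) :
    rankNumber H = m :=
  rankNumber_eq ((isRanking_pathWithStar hm).of_le hstar) fun _ _ hg =>
    (hg.of_le hpath).le_of_pathG (by have := Nat.one_le_two_pow (n := m); omega)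

/-- for `m ≥ 2` and `c = v_{2^{m-1}}` (the unique vertex of label `m` in
the standard ranking of `P_{2^m - 1}`), with `E(c)` the set of all pairs `{c, u}` with
`u` a vertex of `P_{2^m - 1}` not adjacent to `c`, we have
`χᵣ(P_{2^m - 1} ∪ E(c)) = χᵣ(P_{2^m - 1}) = m`; in particular every edge of `E(c)` is
good for `P_{2^m - 1}`. -/
theorem middle_vertex_edges_good (m : ℕ) (hm : 2 ≤ m) :
    rankNumber ((pathG (2 ^ m - 1)) ⊔ SimpleGraph.fromEdgeSet
      {e | ∃ u : ℕ, 1 ≤ u ∧ u ≤ 2 ^ m - 1 ∧ u ≠ 2 ^ (m - 1) ∧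
        ¬(pathG (2 ^ m - 1)).Adj (2 ^ (m - 1)) u ∧ e = s(2 ^ (m - 1), u)}) = m ∧
    rankNumber (pathG (2 ^ m - 1)) = m ∧
    ∀ e ∈ {e : Sym2 ℕ | ∃ u : ℕ, 1 ≤ u ∧ u ≤ 2 ^ m - 1 ∧ u ≠ 2 ^ (m - 1) ∧
        ¬(pathG (2 ^ m - 1)).Adj (2 ^ (m - 1)) u ∧ e = s(2 ^ (m - 1), u)},
      goodEdge (pathG (2 ^ m - 1)) e := by
  set S : Set (Sym2 ℕ) := {e | ∃ u : ℕ, 1 ≤ u ∧ u ≤ 2 ^ m - 1 ∧ u ≠ 2 ^ (m - 1) ∧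
    ¬(pathG (2 ^ m - 1)).Adj (2 ^ (m - 1)) u ∧ e = s(2 ^ (m - 1), u)}
  have key : ∀ T ⊆ S, rankNumber (pathG (2 ^ m - 1) ⊔ fromEdgeSet T) = m := fun T hT =>
    rankNumber_eq_of_le_pathWithStar (by omega) le_sup_left <| sup_le_sup_left
      (fromEdgeSet_mono fun e he => by
        obtain ⟨u, h1, h2, -, -, rfl⟩ := hT he
        exact ⟨u, h1, h2, rfl⟩) _
  have hpath : rankNumber (pathG (2 ^ m - 1)) = m := by
    simpa [fromEdgeSet_empty] using key ∅ (Set.empty_subset _)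
  exact ⟨key S le_rfl, hpath,
    fun e he => (key {e} (Set.singleton_subset_iff.2 he)).trans hpath.symm⟩
end

section
/- Let k ≥ 1 and regard P_{2^k−1} as the subgraph of C_{2^k} induced on {v_1,…,v_{2^k−1}}. If an edge e = {v_m, v_n} with m < n ≤ 2^k−1 and e ∉ E(C_{2^k}) is good for P_{2^k−1}, then e is good for C_{2^k}. -/
/-! Write `N = 2 ^ k`. Off the vertex `v_N`, `C_N ∪ {e}` is `P_{N-1} ∪ {e}`, so a fresh top
label at `v_N` gives `χᵣ(C_N ∪ {e}) ≤ χᵣ(P_{N-1} ∪ {e}) + 1 = χᵣ(P_{N-1}) + 1`. On the other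
hand, the top label of an optimal ranking of the connected graph `C_N` is carried by a single
vertex; rotating it to `v_N`, the rest is a copy of `P_{N-1}` ranked with one label fewer, so
`χᵣ(P_{N-1}) < χᵣ(C_N) ≤ χᵣ(C_N ∪ {e})`. -/

open SimpleGraph

/-- The cycle `C_n` on vertices `v_1, …, v_n` (vertex `vᵢ` is the natural number `i`),
with edges `vᵢ v_{i+1}` for `1 ≤ i ≤ n - 1` together with the edge `v_n v_1`. -/
def cycleG (n : ℕ) : SimpleGraph ℕ :=
  SimpleGraph.fromRel (fun a b => (1 ≤ a ∧ b = a + 1 ∧ b ≤ n) ∨ (a = n ∧ b = 1))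

namespace IsRanking

variable {V W : Type*} {G : SimpleGraph V} {k : ℕ} {f : V → ℕ}

lemma comp_hom (hf : IsRanking G k f) {H : SimpleGraph W} (φ : H →g G)
    (hφ : Function.Injective φ) : IsRanking H k (f ∘ φ) := by
  refine ⟨fun v => hf.1 (φ v), fun u v huv hfuv p hp => ?_⟩
  obtain ⟨w', hw', hlt⟩ := hf.2 (φ u) (φ v) (hφ.ne huv) hfuv (p.map φ) (hp.map hφ)
  rw [Walk.support_map, List.mem_map] at hw'
  obtain ⟨w, hw, rfl⟩ := hw'
  exact ⟨w, hw, hlt⟩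

lemma of_le_s11 (hf : IsRanking G k f) {H : SimpleGraph V} (hHG : H ≤ G) : IsRanking H k f :=
  hf.comp_hom (Hom.ofLE hHG) Function.injective_id

lemma of_eqOn_support (hf : IsRanking G k f) {k' : ℕ} {g : V → ℕ}
    (hg : ∀ v, 1 ≤ g v ∧ g v ≤ k') (hgf : Set.EqOn g f G.support) : IsRanking G k' g := by
  refine ⟨hg, fun u v huv hguv p hp => ?_⟩
  have hsupp : ∀ w ∈ p.support, g w = f w := fun w hw =>
    hgf (mem_support_of_mem_walk_support p (Walk.not_nil_of_ne huv) hw)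
  rw [hsupp u p.start_mem_support, hsupp v p.end_mem_support] at hguv
  obtain ⟨w, hw, hlt⟩ := hf.2 u v huv hguv p hp
  exact ⟨w, hw, by rwa [hsupp u p.start_mem_support, hsupp w hw]⟩

lemma eq_of_reachable (hf : IsRanking G k f) {u v : V} (huv : G.Reachable u v)
    (hu : f u = k) (hv : f v = k) : u = v := by
  classical
  by_contra hne
  obtain ⟨p⟩ := huv
  obtain ⟨w, -, hlt⟩ := hf.2 u v hne (hu.trans hv.symm) p.bypass p.bypass_isPath
  have := (hf.1 w).2
  omega

lemma two_le_of_adj (hf : IsRanking G k f) {u v : V} (huv : G.Adj u v) : 2 ≤ k := by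
  by_contra! hk
  have hu := hf.1 u
  have hv := hf.1 v
  obtain ⟨w, -, hlt⟩ := hf.2 u v huv.ne (by omega) (Walk.cons huv Walk.nil) (by simp [huv.ne])
  have := (hf.1 w).2
  omega

end IsRanking

lemma exists_isRanking_of_support_le {G : SimpleGraph ℕ} {B : ℕ} (hB : ∀ v ∈ G.support, v ≤ B) :
    ∃ f, IsRanking G (B + 1) f := by
  refine ⟨fun v => min v B + 1, fun v => ⟨Nat.le_add_left 1 _, by simp⟩, fun u v huv hfuv p _ => ?_⟩
  dsimp only at hfuv
  have hu := hB u (mem_support_of_mem_walk_support p (Walk.not_nil_of_ne huv) p.start_mem_support)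
  have hv := hB v (mem_support_of_mem_walk_support p (Walk.not_nil_of_ne huv) p.end_mem_support)
  omega

section rankNumber

variable {V : Type*} {G H : SimpleGraph V}

lemma rankNumber_le_of_isRanking {k : ℕ} {f : V → ℕ} (hf : IsRanking G k f) :
    rankNumber G ≤ k :=
  Nat.sInf_le ⟨f, hf⟩

lemma exists_isRanking_rankNumber (hG : ∃ k f, IsRanking G k f) :
    ∃ f, IsRanking G (rankNumber G) f :=
  Nat.sInf_mem hG

lemma rankNumber_mono (hGH : G ≤ H) (hH : ∃ k f, IsRanking H k f) :
    rankNumber G ≤ rankNumber H :=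
  have ⟨_, hf⟩ := exists_isRanking_rankNumber hH
  rankNumber_le_of_isRanking (hf.of_le_s11 hGH)

lemma rankNumber_le_add_one_of_adj_ne (x : V) (hGH : ∀ a b, G.Adj a b → a ≠ x → b ≠ x → H.Adj a b)
    (hH : ∃ k f, IsRanking H k f) : rankNumber G ≤ rankNumber H + 1 := by
  classical
  obtain ⟨g, hg⟩ := exists_isRanking_rankNumber hH
  set r := rankNumber H
  let f : V → ℕ := fun v => if v = x then r + 1 else g v
  have hf_ne : ∀ v, v ≠ x → f v = g v := fun v hv => if_neg hv
  refine rankNumber_le_of_isRanking (f := f) ⟨fun v => ?_, fun u v huv hfuv p hp => ?_⟩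
  · by_cases hv : v = x
    · simp [f, hv]
    · rw [hf_ne v hv]; have := hg.1 v; omega
  have hgx : ∀ v, v ≠ x → f v < r + 1 := fun v hv => by
    rw [hf_ne v hv]; have := hg.1 v; omega
  have hfx : f x = r + 1 := if_pos rfl
  have hu : u ≠ x := by
    rintro rfl; have := hgx v (Ne.symm huv); omega
  have hv : v ≠ x := by
    rintro rfl; have := hgx u huv; omega
  by_cases hxp : x ∈ p.support
  · exact ⟨x, hxp, hfx ▸ hgx u hu⟩
  have hedges : ∀ e ∈ p.edges, e ∈ H.edgeSet := by
    intro e he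
    induction e using Sym2.ind with
    | _ a b =>
      exact hGH a b (p.adj_of_mem_edges he)
        (fun h => hxp (h ▸ p.fst_mem_support_of_mem_edges he))
        (fun h => hxp (h ▸ p.snd_mem_support_of_mem_edges he))
  rw [hf_ne u hu, hf_ne v hv] at hfuv
  obtain ⟨w, hw, hlt⟩ := hg.2 u v huv hfuv (p.transfer H hedges) (hp.transfer hedges)
  rw [Walk.support_transfer] at hw
  refine ⟨w, hw, ?_⟩
  rwa [hf_ne u hu, hf_ne w (fun h => hxp (h ▸ hw))]

end rankNumber

section cycle

variable {N : ℕ}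

lemma mem_support_pathG {v : ℕ} (hv : v ∈ (pathG N).support) : 1 ≤ v ∧ v ≤ N := by
  obtain ⟨w, h⟩ := (mem_support _).1 hv
  rw [pathG, fromRel_adj] at h
  omega

lemma mem_support_cycleG (hN : 1 ≤ N) {v : ℕ} (hv : v ∈ (cycleG N).support) :
    1 ≤ v ∧ v ≤ N := by
  obtain ⟨w, h⟩ := (mem_support _).1 hv
  rw [cycleG, fromRel_adj] at h
  omega

lemma pathG_le_cycleG : pathG (N - 1) ≤ cycleG N := by
  intro a b h
  rw [pathG, fromRel_adj] at h
  rw [cycleG, fromRel_adj]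
  omega

lemma cycleG_adj_one_two (hN : 2 ≤ N) : (cycleG N).Adj 1 2 := by
  rw [cycleG, fromRel_adj]
  omega

lemma cycleG_reachable_one {v : ℕ} (hv : 1 ≤ v) (hvN : v ≤ N) : (cycleG N).Reachable 1 v := by
  induction v, hv using Nat.le_induction with
  | base => rfl
  | succ v hv ih =>
    refine (ih (by omega)).trans (Adj.reachable ?_)
    rw [cycleG, fromRel_adj]
    omega

lemma IsRanking.exists_top_cycleG {k : ℕ} {f : ℕ → ℕ} (hf : IsRanking (cycleG N) k f)
    (hN : 1 ≤ N) : ∃ x, 1 ≤ x ∧ x ≤ N ∧ ∀ v, 1 ≤ v → v ≤ N → f v = k → v = x := by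
  by_cases h : ∃ x, 1 ≤ x ∧ x ≤ N ∧ f x = k
  · obtain ⟨x, hx, hxN, hfx⟩ := h
    refine ⟨x, hx, hxN, fun v hv hvN hfv => hf.eq_of_reachable ?_ hfv hfx⟩
    exact (cycleG_reachable_one hv hvN).symm.trans (cycleG_reachable_one hx hxN)
  · push Not at h
    exact ⟨N, hN, le_rfl, fun v hv hvN hfv => absurd hfv (h v hv hvN)⟩

/-- The rotation `vᵢ ↦ v_{i+j}` of `C_N` (indices mod `N`), extended by the identity. -/
def cycleRotate (N j i : ℕ) : ℕ :=
  if 1 ≤ i ∧ i ≤ N then (if i + j ≤ N then i + j else i + j - N) else i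

variable {j : ℕ}

lemma cycleRotate_self (hj : 1 ≤ j) (hjN : j ≤ N) : cycleRotate N j N = j := by
  unfold cycleRotate
  split_ifs <;> omega

lemma cycleRotate_injective (hjN : j ≤ N) : Function.Injective (cycleRotate N j) := by
  intro a b h
  unfold cycleRotate at h
  split_ifs at h <;> omega

lemma cycleRotate_adj (hjN : j ≤ N) {a b : ℕ} (h : (pathG (N - 1)).Adj a b) :
    (cycleG N).Adj (cycleRotate N j a) (cycleRotate N j b) := by
  simp only [pathG, cycleG, fromRel_adj, cycleRotate] at h ⊢
  split_ifs <;> omega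

theorem rankNumber_pathG_lt_rankNumber_cycleG (hN : 2 ≤ N) :
    rankNumber (pathG (N - 1)) < rankNumber (cycleG N) := by
  obtain ⟨f, hf⟩ := exists_isRanking_rankNumber
    ⟨_, exists_isRanking_of_support_le (G := cycleG N) fun _ hv => (mem_support_cycleG (by omega) hv).2⟩
  set c := rankNumber (cycleG N)
  have hc := hf.two_le_of_adj (cycleG_adj_one_two hN)
  obtain ⟨x, hx, hxN, htop⟩ := hf.exists_top_cycleG (by omega)
  let ρ : pathG (N - 1) →g cycleG N := ⟨cycleRotate N x, cycleRotate_adj hxN⟩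
  have hρ : Function.Injective ρ := cycleRotate_injective hxN
  have hfρ : ∀ v ∈ (pathG (N - 1)).support, f (ρ v) ≤ c - 1 := by
    rintro v ⟨w, hvw⟩
    have hv := mem_support_pathG ⟨w, hvw⟩
    have hρv := mem_support_cycleG (by omega) (ρ.map_adj hvw).left_mem_support
    have hne : f (ρ v) ≠ c := fun hfv => by
      have := hρ ((htop _ hρv.1 hρv.2 hfv).trans (cycleRotate_self hx hxN).symm)
      omega
    have := (hf.1 (ρ v)).2
    omega
  have hg : IsRanking (pathG (N - 1)) (c - 1) fun v => min (f (ρ v)) (c - 1) :=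
    (hf.comp_hom ρ hρ).of_eqOn_support (fun v => ⟨le_min (hf.1 _).1 (by omega), min_le_right _ _⟩)
      fun v hv => min_eq_left (hfρ v hv)
  have := rankNumber_le_of_isRanking hg
  omega

theorem goodEdge_cycleG_of_goodEdge_pathG (hN : 2 ≤ N) {m n : ℕ}
    (hgood : goodEdge (pathG (N - 1)) s(m, n)) : goodEdge (cycleG N) s(m, n) := by
  set E := fromEdgeSet {s(m, n)}
  have hCE : ∃ k f, IsRanking (cycleG N ⊔ E) k f := by
    refine ⟨_, exists_isRanking_of_support_le (B := N + m + n) fun v hv => ?_⟩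
    obtain ⟨w, hvw⟩ := (mem_support _).1 hv
    simp only [E, sup_adj, cycleG, fromRel_adj, fromEdgeSet_adj, Set.mem_singleton_iff,
      Sym2.eq_iff] at hvw
    omega
  have hPE : ∃ k f, IsRanking (pathG (N - 1) ⊔ E) k f :=
    let ⟨k, f, hf⟩ := hCE
    ⟨k, f, hf.of_le_s11 (sup_le_sup_right pathG_le_cycleG E)⟩
  have hdel : ∀ a b, (cycleG N ⊔ E).Adj a b → a ≠ N → b ≠ N → (pathG (N - 1) ⊔ E).Adj a b := by
    intro a b hab ha hb
    refine hab.imp (fun h => ?_) id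
    rw [cycleG, fromRel_adj] at h
    rw [pathG, fromRel_adj]
    omega
  refine le_antisymm ?_ (rankNumber_mono le_sup_left hCE)
  calc rankNumber (cycleG N ⊔ E)
      ≤ rankNumber (pathG (N - 1) ⊔ E) + 1 := rankNumber_le_add_one_of_adj_ne N hdel hPE
    _ = rankNumber (pathG (N - 1)) + 1 := by rw [show rankNumber (pathG (N - 1) ⊔ E) = _ from hgood]
    _ ≤ rankNumber (cycleG N) := rankNumber_pathG_lt_rankNumber_cycleG hN

end cycle

theorem good_for_path_good_for_cycle_general (k m n : ℕ) (hk : 1 ≤ k)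
    (hgood : goodEdge (pathG (2 ^ k - 1)) s(m, n)) :
    goodEdge (cycleG (2 ^ k)) s(m, n) :=
  goodEdge_cycleG_of_goodEdge_pathG (Nat.one_lt_two_pow (by omega)) hgood

/-- regarding `P_{2^k - 1}` as the subgraph of `C_{2^k}` induced on
`{v_1, …, v_{2^k - 1}}`, if an edge `e = {v_m, v_n}` with `m < n ≤ 2^k - 1` and
`e ∉ E(C_{2^k})` is good for `P_{2^k - 1}`, then `e` is good for `C_{2^k}`. -/
theorem good_for_path_good_for_cycle (k m n : ℕ) (hk : 1 ≤ k) (hm : 1 ≤ m)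
    (hmn : m < n) (hn : n ≤ 2 ^ k - 1)
    (he : s(m, n) ∉ (cycleG (2 ^ k)).edgeSet)
    (hgood : goodEdge (pathG (2 ^ k - 1)) s(m, n)) :
    goodEdge (cycleG (2 ^ k)) s(m, n) :=
  good_for_path_good_for_cycle_general k m n hk hgood
end

section
/- Let t ≥ 2 and let m_1, m_2, …, m_t be positive integers with m_1 > m_i for all 2 ≤ i ≤ t. Then every edge joining two distinct vertices of the part V_1 of size m_1 is forbidden for K_{m_1,…,m_t}. -/
/-!
Let `q` be the number of vertices outside the largest part `V₁`. Labelling `V₁` with `1` and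
the other vertices injectively with `2, …, q + 1` ranks `K = K_{m₁,…,mₜ}`. Now take a ranking of
`K + e`. If its labels are pairwise distinct there are `n ≥ q + 2` of them, since `|V₁| ≥ 2`.
Otherwise some label repeats at two vertices, necessarily of one part `Vⱼ`; every vertex outside
`Vⱼ` is a common neighbour of both, so these `n - |Vⱼ|` vertices carry pairwise distinct labels,
none of which occurs in `Vⱼ`. For `j = 1` the edge `e` forces two labels inside `V₁`; for `j ≠ 1`
we have `n - |Vⱼ| ≥ q + 1`, and `Vⱼ` uses at least one label. Either way `q + 2` labels are needed.
-/

open SimpleGraph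

/-- An edge `e ∉ E(G)` is forbidden for `G` if adding it increases the rank number. -/
def forbiddenEdge {V : Type*} (G : SimpleGraph V) (e : Sym2 V) : Prop :=
  rankNumber G < rankNumber (G ⊔ SimpleGraph.fromEdgeSet {e})

open Finset

namespace IsRanking

variable {V : Type*} {G : SimpleGraph V} {k : ℕ} {f : V → ℕ}

lemma ne_of_adj (hf : IsRanking G k f) {u v : V} (h : G.Adj u v) : f u ≠ f v := by
  intro hfe
  obtain ⟨w, hw, hlt⟩ := hf.2 u v h.ne hfe (.cons h .nil) (by simp [h.ne])
  rw [Walk.support_cons, Walk.support_nil, List.mem_cons, List.mem_singleton] at hw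
  rcases hw with rfl | rfl <;> omega

lemma lt_of_mem_commonNeighbors (hf : IsRanking G k f) {u v w : V} (huv : u ≠ v)
    (hfe : f u = f v) (hw : w ∈ G.commonNeighbors u v) : f u < f w := by
  obtain ⟨huw, hvw⟩ := (mem_commonNeighbors G).1 hw
  obtain ⟨x, hx, hlt⟩ := hf.2 u v huv hfe (.cons huw (.cons hvw.symm .nil))
    (by simp [huw.ne, hvw.ne.symm, huv])
  simp only [Walk.support_cons, Walk.support_nil, List.mem_cons, List.not_mem_nil, or_false] at hx
  rcases hx with rfl | rfl | rfl <;> omega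

/-- Two equal labels on common neighbours of `u` and `v` would each have to exceed the other. -/
lemma injOn_commonNeighbors (hf : IsRanking G k f) {u v : V} (huv : u ≠ v)
    (hfe : f u = f v) : Set.InjOn f (G.commonNeighbors u v) := by
  intro x hx y hy hxy
  by_contra hne
  have hu : u ∈ G.commonNeighbors x y :=
    (mem_commonNeighbors G).2 ⟨((mem_commonNeighbors G).1 hx).1.symm,
      ((mem_commonNeighbors G).1 hy).1.symm⟩
  have := hf.lt_of_mem_commonNeighbors huv hfe hx
  have := hf.lt_of_mem_commonNeighbors hne hxy hu
  omega

lemma card_image_le [Fintype V] (hf : IsRanking G k f) : #(univ.image f) ≤ k :=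
  calc #(univ.image f) ≤ #(Icc 1 k) :=
        card_le_card fun _ hx ↦ by
          obtain ⟨v, -, rfl⟩ := mem_image.1 hx
          exact mem_Icc.2 (hf.1 v)
    _ = k := by simp

end IsRanking

section IndepSet

variable {V : Type*} [Fintype V] [DecidableEq V] {G : SimpleGraph V}

/-- A path leaving a vertex of `S` immediately steps outside `S`, where all labels exceed `1`. -/
lemma exists_isRanking_of_isIndepSet {S : Finset V} (hS : G.IsIndepSet S) :
    ∃ f, IsRanking G (#Sᶜ + 1) f := by
  let f : V → ℕ := fun v ↦
    if h : v ∈ S then 1 else (Sᶜ.equivFin ⟨v, mem_compl.2 h⟩ : ℕ) + 2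
  refine ⟨f, fun v ↦ ?_, fun u v huv hfe p _ ↦ ?_⟩
  · by_cases h : v ∈ S
    · simp [f, h]
    · have := (Sᶜ.equivFin ⟨v, mem_compl.2 h⟩).isLt
      simp only [f, dif_neg h]
      omega
  · have hu : u ∈ S := by
      by_contra hu
      by_cases hv : v ∈ S
      · simp [f, hu, hv] at hfe
      · simp only [f, dif_neg hu, dif_neg hv, add_left_inj, Fin.val_inj,
          Equiv.apply_eq_iff_eq, Subtype.mk.injEq] at hfe
        exact huv hfe
    cases p with
    | nil => exact absurd rfl huv
    | @cons _ c _ hadj _ =>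
      have hc : c ∉ S := fun hc ↦ hS hu hc hadj.ne hadj
      exact ⟨c, by simp, by simp [f, hu, hc]⟩

lemma rankNumber_le_of_isIndepSet {S : Finset V} (hS : G.IsIndepSet S) :
    rankNumber G ≤ #Sᶜ + 1 :=
  let ⟨_, hf⟩ := exists_isRanking_of_isIndepSet hS
  Nat.sInf_le ⟨_, hf⟩

end IndepSet

lemma le_rankNumber {V : Type*} [Fintype V] {G : SimpleGraph V} {n : ℕ}
    (h : ∀ k f, IsRanking G k f → n ≤ k) : n ≤ rankNumber G := by
  classical
  obtain ⟨_, hf⟩ := exists_isRanking_of_isIndepSet (G := G) (S := ∅) (by simp)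
  obtain ⟨f, hf⟩ := Nat.sInf_mem (s := {k | ∃ f : V → ℕ, IsRanking G k f}) ⟨_, _, hf⟩
  exact h _ f hf

section PartFunction

variable {V ι : Type*} [Fintype V] [DecidableEq ι] {H : SimpleGraph V} {p : V → ι}
  {k : ℕ} {g : V → ℕ}

lemma IsRanking.card_image_eq_of_eq (hH : ∀ u v, p u ≠ p v → H.Adj u v)
    (hg : IsRanking H k g) {u v : V} (huv : u ≠ v) (hfe : g u = g v) :
    #(univ.image g) = #(({w | p w = p u} : Finset V).image g) + #{w | p w ≠ p u} := by
  classical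
  have hv : p v = p u := by
    by_contra h
    exact hg.ne_of_adj (hH u v (Ne.symm h)) hfe
  have hcommon : ∀ w, p w ≠ p u → w ∈ H.commonNeighbors u v := fun w hw ↦
    (mem_commonNeighbors H).2 ⟨hH u w (Ne.symm hw), hH v w (hv ▸ Ne.symm hw)⟩
  have hdisj : Disjoint (({w | p w = p u} : Finset V).image g)
      (({w | p w ≠ p u} : Finset V).image g) := by
    simp only [Finset.disjoint_left, mem_image, mem_filter, mem_univ, true_and]
    rintro _ ⟨x, hx, rfl⟩ ⟨y, hy, hxy⟩
    exact hg.ne_of_adj (hH x y (hx ▸ Ne.symm hy)) hxy.symm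
  have hinj : Set.InjOn g ({w | p w ≠ p u} : Finset V) := fun x hx y hy ↦
    hg.injOn_commonNeighbors huv hfe (hcommon x (by simpa using hx))
      (hcommon y (by simpa using hy))
  have hunion : univ.image g = ({w | p w = p u} : Finset V).image g ∪
      ({w | p w ≠ p u} : Finset V).image g := by
    rw [← image_union, filter_union_filter_not_eq]
  rw [hunion, card_union_of_disjoint hdisj, card_image_of_injOn hinj]

lemma IsRanking.card_filter_ne_add_two_le {i : ι}
    (hH : ∀ u v, p u ≠ p v → H.Adj u v)
    (hmax : ∀ j ≠ i, #{v | p v = j} < #{v | p v = i})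
    {a b : V} (ha : p a = i) (hb : p b = i) (hab : H.Adj a b) (hg : IsRanking H k g) :
    #{v | p v ≠ i} + 2 ≤ k := by
  have hk := hg.card_image_le
  have hsplit : ∀ j, #{v | p v = j} + #{v | p v ≠ j} = Fintype.card V := fun j ↦
    card_filter_add_card_filter_not _
  have hpart : 2 ≤ #(({v | p v = i} : Finset V).image g) :=
    one_lt_card.2 ⟨g a, mem_image_of_mem g (by simp [ha]), g b,
      mem_image_of_mem g (by simp [hb]), hg.ne_of_adj hab⟩
  by_cases hinj : Function.Injective g
  · rw [card_image_of_injective _ hinj, card_univ] at hk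
    have := Finset.card_image_le (s := ({v | p v = i} : Finset V)) (f := g)
    have := hsplit i
    omega
  obtain ⟨u, v, hfe, huv⟩ := Function.not_injective_iff.1 hinj
  rw [hg.card_image_eq_of_eq hH huv hfe] at hk
  by_cases hu : p u = i
  · rw [hu] at hk
    omega
  · have hu_part : 1 ≤ #(({w | p w = p u} : Finset V).image g) :=
      card_pos.2 ⟨g u, mem_image_of_mem g (by simp)⟩
    have := hmax _ hu
    have := hsplit i
    have := hsplit (p u)
    omega

end PartFunction

lemma card_filter_sigma_fst_eq {ι : Type*} [DecidableEq ι] {β : ι → Type*} [Fintype ι]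
    [∀ i, Fintype (β i)] (i : ι) : #{v : Σ i, β i | v.1 = i} = Fintype.card (β i) := by
  have : ({v : Σ i, β i | v.1 = i} : Finset _) = ({i} : Finset ι).sigma fun _ ↦ univ := by
    ext ⟨j, x⟩
    simp
  rw [this, card_sigma, sum_singleton, card_univ]

theorem multipartite_max_part_edge_forbidden_general (t : ℕ) (m : Fin t → ℕ)
    (i₁ : Fin t) (hmax : ∀ i, i ≠ i₁ → m i < m i₁)
    (a b : Fin (m i₁)) (hab : a ≠ b) :
    forbiddenEdge (SimpleGraph.completeMultipartiteGraph fun i => Fin (m i))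
      s(⟨i₁, a⟩, ⟨i₁, b⟩) := by
  set G := completeMultipartiteGraph fun i ↦ Fin (m i)
  have hparts : G.IsIndepSet ({v : Σ i, Fin (m i) | v.1 = i₁} : Finset _) :=
    fun u hu v hv _ huv ↦ huv (by simp_all [G])
  have hlower : ∀ k f, IsRanking (G ⊔ fromEdgeSet {s(⟨i₁, a⟩, ⟨i₁, b⟩)}) k f →
      #{v : Σ i, Fin (m i) | v.1 ≠ i₁} + 2 ≤ k := fun k f hf ↦
    hf.card_filter_ne_add_two_le (p := Sigma.fst) (a := ⟨i₁, a⟩) (b := ⟨i₁, b⟩)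
      (fun u v huv ↦ by simpa [G] using Or.inl huv)
      (fun j hj ↦ by simpa only [card_filter_sigma_fst_eq, Fintype.card_fin] using hmax j hj)
      rfl rfl (by simp [hab])
  have hupper := rankNumber_le_of_isIndepSet hparts
  rw [compl_filter] at hupper
  exact hupper.trans_lt (le_rankNumber hlower)

/-- in the complete multipartite graph with parts `Vᵢ = Fin (m i)` of
sizes `m i ≥ 1` (at least two parts), if the part indexed `i₁` is strictly largest,
then every edge joining two distinct vertices of that part is forbidden. -/
theorem multipartite_max_part_edge_forbidden (t : ℕ) (ht : 2 ≤ t) (m : Fin t → ℕ)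
    (hm : ∀ i, 1 ≤ m i) (i₁ : Fin t) (hmax : ∀ i, i ≠ i₁ → m i < m i₁)
    (a b : Fin (m i₁)) (hab : a ≠ b) :
    forbiddenEdge (SimpleGraph.completeMultipartiteGraph fun i => Fin (m i))
      s(⟨i₁, a⟩, ⟨i₁, b⟩) :=
  multipartite_max_part_edge_forbidden_general t m i₁ hmax a b hab
end

section
/- For every integer n ≥ 2, μ(G_n) = 2(n−1); that is, the maximum number of edges that can be added to G_n without changing its rank number is 2(n−1). -/
open SimpleGraph

/-- `μ(G)`: the maximum cardinality of a set `S` of edges on `V(G)` (non-loops,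
disjoint from `E(G)`) such that `χᵣ(G ∪ S) = χᵣ(G)`. -/
noncomputable def mu {V : Type*} (G : SimpleGraph V) : ℕ :=
  sSup {N | ∃ S : Finset (Sym2 V), S.card = N ∧
    (∀ e ∈ S, ¬e.IsDiag ∧ e ∉ G.edgeSet) ∧
    rankNumber (G ⊔ SimpleGraph.fromEdgeSet (S : Set (Sym2 V))) = rankNumber G}

/-- `G_n`: two disjoint copies of the complete graph `K_n`, with vertex sets
`W = {w_1, …, w_n}` (the left summand, `wᵢ = Sum.inl ⟨i - 1, _⟩`) and
`V = {v_1, …, v_n}` (the right summand, `vᵢ = Sum.inr ⟨i - 1, _⟩`), joined by the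
single edge `w_1 v_n`. -/
def twoCliques (n : ℕ) : SimpleGraph (Fin n ⊕ Fin n) :=
  SimpleGraph.fromRel (fun a b =>
    (∃ i j : Fin n, a = Sum.inl i ∧ b = Sum.inl j) ∨
    (∃ i j : Fin n, a = Sum.inr i ∧ b = Sum.inr j) ∨
    (∃ i j : Fin n, i.val = 0 ∧ j.val = n - 1 ∧ a = Sum.inl i ∧ b = Sum.inr j))

/-!
Each clique needs `n` distinct labels. Given a ranking with at most `n + 1` labels of a supergraph
`H` of `G_n`, let `ℓ` be the largest label occurring on both sides. A cross edge `w_a v_b` of `H`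
lies on a path between the two vertices labelled `ℓ`, so one of its endpoints has a larger label.
Labels above `ℓ` occur on one side only, and each side misses at most one of the `n + 1` labels,
so each side has at most one vertex above `ℓ`. Hence `χ_r(G_n) = n + 1` (with only `n` labels no
vertex is above `ℓ`, yet the bridge `w_1 v_n` needs one), and if adding `S` keeps the rank number,
all cross edges of `G_n ∪ S` are incident to one `w` or one `v`: at most `2n - 1` of them, the bridge
included. Conversely, labelling `w_i ↦ n + 1 - i`, `v_j ↦ j` for `j < n` and `v_n ↦ n + 1` is an
`(n + 1)`-ranking even after adding all `2(n - 1)` cross edges at `w_1` or `v_n`.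
-/

open SimpleGraph Function Finset Sum

section Ranking

variable {V : Type*} {H : SimpleGraph V} {k : ℕ} {f : V → ℕ}

theorem IsRanking.exists_lt_of_walk (hf : IsRanking H k f) {u v : V} (huv : u ≠ v)
    (he : f u = f v) (p : H.Walk u v) : ∃ w ∈ p.support, f u < f w := by
  classical
  obtain ⟨w, hw, hlt⟩ := hf.2 u v huv he p.bypass p.bypass_isPath
  exact ⟨w, p.support_bypass_subset_support hw, hlt⟩

theorem IsRanking.injective_comp {ι : Type*} (hf : IsRanking H k f) {e : ι → V}
    (he : ∀ i j, i ≠ j → H.Adj (e i) (e j)) : Injective (f ∘ e) := by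
  intro i j hij
  by_contra hne
  have hadj := he i j hne
  obtain ⟨w, hw, hlt⟩ := hf.exists_lt_of_walk hadj.ne hij hadj.toWalk
  simp only [Walk.support_cons, Walk.support_nil, List.mem_cons, List.not_mem_nil, or_false] at hw
  rcases hw with rfl | rfl <;> simp_all

theorem IsRanking.not_reachable_induce (hf : IsRanking H k f) {u v : V} (huv : u ≠ v)
    (he : f u = f v) :
    ¬(H.induce {w | f w ≤ f u}).Reachable ⟨u, le_refl (f u)⟩ ⟨v, he.ge⟩ := by
  rintro ⟨p⟩
  obtain ⟨w, hw, hlt⟩ := hf.exists_lt_of_walk huv he (p.map (Embedding.induce _).toHom)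
  have hw' : w ∈ (p.map (Embedding.induce {w | f w ≤ f u}).toHom).support := hw
  rw [Walk.support_map, List.mem_map] at hw'
  obtain ⟨w, -, rfl⟩ := hw'
  exact absurd w.2 (not_le.2 hlt)

end Ranking

section RankNumber

variable {V : Type*} {H : SimpleGraph V}

theorem rankNumber_le {k : ℕ} {f : V → ℕ} (hf : IsRanking H k f) : rankNumber H ≤ k :=
  Nat.sInf_le ⟨f, hf⟩

theorem exists_isRanking_rankNumber_s19 (h : 0 < rankNumber H) :
    ∃ f, IsRanking H (rankNumber H) f :=
  Nat.sInf_mem (Nat.nonempty_of_pos_sInf h)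

theorem le_rankNumber_s19 {m k : ℕ} {f : V → ℕ} (hf : IsRanking H k f)
    (h : ∀ k f, IsRanking H k f → m ≤ k) : m ≤ rankNumber H :=
  le_csInf ⟨k, f, hf⟩ fun k ⟨f, hf⟩ => h k f hf

end RankNumber

section SumRanking

variable {α β : Type*} {H : SimpleGraph (α ⊕ β)} {k : ℕ} {f : α ⊕ β → ℕ}

theorem IsRanking.lt_or_lt_of_adj_inl_inr (hf : IsRanking H k f)
    (hK : (⊤ : SimpleGraph α) ⊕g (⊤ : SimpleGraph β) ≤ H) {a i : α} {b j : β}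
    (hab : H.Adj (inl a) (inr b)) (hij : f (inl i) = f (inr j)) :
    f (inl i) < f (inl a) ∨ f (inl i) < f (inr b) := by
  by_contra! h
  let low : Set (α ⊕ β) := {w | f w ≤ f (inl i)}
  have step : ∀ u v (hu : u ∈ low) (hv : v ∈ low), u = v ∨ H.Adj u v →
      (H.induce low).Reachable ⟨u, hu⟩ ⟨v, hv⟩ := by
    rintro u v hu hv (rfl | huv)
    · rfl
    · exact Adj.reachable (by simpa using huv)
  refine hf.not_reachable_induce inl_ne_inr hij
    (((step _ (inl a) _ h.1 ?_).trans (step _ (inr b) _ h.2 (.inr hab))).trans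
      (step _ _ _ _ ?_))
  · by_cases hia : i = a
    · exact .inl (by rw [hia])
    · exact .inr (hK (by simpa using hia))
  · by_cases hbj : b = j
    · exact .inl (by rw [hbj])
    · exact .inr (hK (by simpa using hbj))

theorem isRanking_of_lt_or_lt (hbd : ∀ v, 1 ≤ f v ∧ f v ≤ k)
    (hL : Injective (f ∘ inl)) (hR : Injective (f ∘ inr))
    (hcross : ∀ a b i j, H.Adj (inl a) (inr b) → f (inl i) = f (inr j) →
      f (inl i) < f (inl a) ∨ f (inl i) < f (inr b)) :
    IsRanking H k f := by
  have key : ∀ i j (p : H.Walk (inl i) (inr j)), f (inl i) = f (inr j) →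
      ∃ w ∈ p.support, f (inl i) < f w := by
    intro i j p hij
    obtain ⟨⟨⟨u, v⟩, huv⟩, hd, hu, hv⟩ := p.exists_boundary_dart (Set.range inl) ⟨i, rfl⟩ (by simp)
    obtain ⟨a, rfl⟩ := hu
    obtain ⟨b, rfl⟩ : ∃ b, v = inr b := by cases v <;> simp_all
    rcases hcross a b i j huv hij with h | h
    · exact ⟨_, p.dart_fst_mem_support_of_mem_darts hd, h⟩
    · exact ⟨_, p.dart_snd_mem_support_of_mem_darts hd, h⟩
  refine ⟨hbd, ?_⟩
  rintro (i | i) (j | j) hne he p -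
  · exact absurd (congrArg inl (hL he)) hne
  · exact key i j p he
  · obtain ⟨w, hw, hlt⟩ := key j i p.reverse he.symm
    exact ⟨w, by simpa using hw, he ▸ hlt⟩
  · exact absurd (congrArg inr (hR he)) hne

end SumRanking

section Counting

variable {ι : Type*} [Fintype ι] {fL fR : ι → ℕ} {T : Finset ℕ}

theorem card_filter_lt_add_card_le (hL : Injective fL) (hR : Injective fR)
    (hLT : ∀ a, fL a ∈ T) (hRT : ∀ b, fR b ∈ T) {ℓ : ℕ}
    (hℓ : ∀ a b, fL a = fR b → fL a ≤ ℓ) :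
    #{a | ℓ < fL a} + Fintype.card ι ≤ #T := by
  classical
  have hdisj : Disjoint (({a | ℓ < fL a} : Finset ι).image fL) (univ.image fR) := by
    simp only [Finset.disjoint_left, mem_image, mem_filter, mem_univ, true_and]
    rintro _ ⟨a, ha, rfl⟩ ⟨b, hb⟩
    exact (hℓ a b hb.symm).not_gt ha
  calc #{a | ℓ < fL a} + Fintype.card ι
      = #(({a | ℓ < fL a} : Finset ι).image fL ∪ univ.image fR) := by
        rw [card_union_of_disjoint hdisj, card_image_of_injective _ hL,
          card_image_of_injective _ hR, card_univ]
    _ ≤ #T := card_le_card (union_subset (by simp [image_subset_iff, hLT])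
        (by simp [image_subset_iff, hRT]))

theorem exists_max_common_value (hL : Injective fL) (hR : Injective fR)
    (hLT : ∀ a, fL a ∈ T) (hRT : ∀ b, fR b ∈ T) (hT : #T < 2 * Fintype.card ι) :
    ∃ i j, fL i = fR j ∧ ∀ a b, fL a = fR b → fL a ≤ fL i := by
  classical
  obtain ⟨_, hm⟩ := inter_nonempty_of_card_lt_card_add_card
    (image_subset_iff.2 fun a _ => hLT a) (image_subset_iff.2 fun b _ => hRT b)
    (by rw [card_image_of_injective _ hL, card_image_of_injective _ hR, card_univ]; omega)
  simp only [mem_inter, mem_image, mem_univ, true_and] at hm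
  obtain ⟨⟨i, hi⟩, ⟨j, hj⟩⟩ := hm
  obtain ⟨⟨i, j⟩, hij, hmax⟩ := exists_max_image {p : ι × ι | fL p.1 = fR p.2}
    (fun p => fL p.1) ⟨(i, j), by simp [hi, hj]⟩
  exact ⟨i, j, by simpa using hij, fun a b h => hmax (a, b) (by simpa using h)⟩

end Counting

section TwoCliqueRanking

variable {ι : Type*} [Fintype ι] {H : SimpleGraph (ι ⊕ ι)} {k : ℕ} {f : ι ⊕ ι → ℕ}

/-- The witness `ℓ` is the largest label occurring on both sides. -/
theorem IsRanking.exists_threshold (hf : IsRanking H k f)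
    (hK : (⊤ : SimpleGraph ι) ⊕g (⊤ : SimpleGraph ι) ≤ H) (hk : k < 2 * Fintype.card ι) :
    ∃ ℓ, #{a | ℓ < f (inl a)} + Fintype.card ι ≤ k ∧
      #{b | ℓ < f (inr b)} + Fintype.card ι ≤ k ∧
      ∀ a b, H.Adj (inl a) (inr b) → ℓ < f (inl a) ∨ ℓ < f (inr b) := by
  have hL := hf.injective_comp (e := inl) fun i j h => hK (by simpa using h)
  have hR := hf.injective_comp (e := inr) fun i j h => hK (by simpa using h)
  have hT : ∀ v, f v ∈ Icc 1 k := fun v => mem_Icc.2 (hf.1 v)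
  obtain ⟨i, j, hij, hmax⟩ :=
    exists_max_common_value hL hR (fun _ => hT _) (fun _ => hT _) (by simpa using hk)
  refine ⟨f (inl i), ?_, ?_, fun a b hab => hf.lt_or_lt_of_adj_inl_inr hK hab hij⟩
  · simpa using card_filter_lt_add_card_le hL hR (fun _ => hT _) (fun _ => hT _) hmax
  · simpa using card_filter_lt_add_card_le hR hL (fun _ => hT _) (fun _ => hT _)
      fun b a h => h.trans_le (hmax a b h.symm)

theorem IsRanking.card_add_one_le (hf : IsRanking H k f)
    (hK : (⊤ : SimpleGraph ι) ⊕g (⊤ : SimpleGraph ι) ≤ H) {a b : ι}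
    (hab : H.Adj (inl a) (inr b)) : Fintype.card ι + 1 ≤ k := by
  have := Fintype.card_pos_iff.2 ⟨a⟩
  by_contra! hk
  obtain ⟨ℓ, hlow, hhigh, hcross⟩ := hf.exists_threshold hK (by omega)
  rcases hcross a b hab with h | h
  · have : 0 < #{a | ℓ < f (inl a)} := card_pos.2 ⟨a, by simpa using h⟩
    omega
  · have : 0 < #{b | ℓ < f (inr b)} := card_pos.2 ⟨b, by simpa using h⟩
    omega

theorem IsRanking.exists_cover (hf : IsRanking H (Fintype.card ι + 1) f)
    (hK : (⊤ : SimpleGraph ι) ⊕g (⊤ : SimpleGraph ι) ≤ H) (hι : 2 ≤ Fintype.card ι) :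
    ∃ w x, ∀ a b, H.Adj (inl a) (inr b) → a = w ∨ b = x := by
  have : Nonempty ι := Fintype.card_pos_iff.1 (by omega)
  obtain ⟨ℓ, hlow, hhigh, hcross⟩ := hf.exists_threshold hK (by omega)
  obtain ⟨w, hw⟩ := card_le_one_iff_subset_singleton.1 (show #{a | ℓ < f (inl a)} ≤ 1 by omega)
  obtain ⟨x, hx⟩ := card_le_one_iff_subset_singleton.1 (show #{b | ℓ < f (inr b)} ≤ 1 by omega)
  refine ⟨w, x, fun a b hab => (hcross a b hab).imp (fun h => ?_) (fun h => ?_)⟩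
  · simpa using hw (mem_filter.2 ⟨mem_univ a, h⟩)
  · simpa using hx (mem_filter.2 ⟨mem_univ b, h⟩)

end TwoCliqueRanking

section CrossEdges

variable {α β : Type*}

def crossEdge : α × β ↪ Sym2 (α ⊕ β) :=
  ⟨fun p => s(inl p.1, inr p.2), fun p q h => by simpa [Prod.ext_iff] using h⟩

@[simp]
theorem crossEdge_apply (p : α × β) : crossEdge p = s(inl p.1, inr p.2) :=
  rfl

def crossStar [Fintype α] [Fintype β] [DecidableEq α] [DecidableEq β] (w : α) (x : β) :
    Finset (α × β) :=
  {p | p.1 = w ∨ p.2 = x}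

theorem card_crossStar [Fintype α] [Fintype β] [DecidableEq α] [DecidableEq β]
    (w : α) (x : β) : #(crossStar w x) + 1 = Fintype.card α + Fintype.card β := by
  have hunion : crossStar w x = {w} ×ˢ univ ∪ univ ×ˢ {x} := by
    ext p; simp only [crossStar, mem_filter, mem_union, mem_product, mem_singleton, mem_univ,
      true_and, and_true]
  have hinter : ({w} ×ˢ univ ∩ univ ×ˢ {x} : Finset (α × β)) = {(w, x)} := by
    ext p; simp [Prod.ext_iff, eq_comm]
  have := card_union_add_card_inter ({w} ×ˢ (univ : Finset β)) (univ ×ˢ {x})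
  rw [← hunion, hinter] at this
  simpa [card_product, add_comm] using this

end CrossEdges

section TwoCliques

variable {m : ℕ}

theorem sum_top_le_twoCliques (n : ℕ) :
    (⊤ : SimpleGraph (Fin n)) ⊕g (⊤ : SimpleGraph (Fin n)) ≤ twoCliques n := by
  rintro (i | i) (j | j) h <;> simp_all [twoCliques]

theorem twoCliques_adj_inl_inr {a b : Fin (m + 1)} :
    (twoCliques (m + 1)).Adj (inl a) (inr b) ↔ a = 0 ∧ b = Fin.last m := by
  simp only [twoCliques, fromRel_adj]
  simp [and_comm, ← Fin.val_eq_val b (Fin.last m)]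

theorem exists_crossEdge_eq {n : ℕ} {e : Sym2 (Fin n ⊕ Fin n)} (hd : ¬e.IsDiag)
    (he : e ∉ (twoCliques n).edgeSet) : ∃ p, crossEdge p = e := by
  induction e using Sym2.ind with | h u v => ?_
  have huv : u ≠ v := by simpa using hd
  rcases u with a | a <;> rcases v with b | b
  · exact absurd (sum_top_le_twoCliques n (by simpa using huv)) he
  · exact ⟨(a, b), rfl⟩
  · exact ⟨(b, a), Sym2.eq_swap⟩
  · exact absurd (sum_top_le_twoCliques n (by simpa using huv)) he

def optimalLabel (m : ℕ) : Fin (m + 1) ⊕ Fin (m + 1) → ℕ :=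
  Sum.elim (fun i => m + 1 - i) (fun j => if (j : ℕ) = m then m + 2 else j + 1)

theorem isRanking_optimalLabel {H : SimpleGraph (Fin (m + 1) ⊕ Fin (m + 1))}
    (hcov : ∀ a b, H.Adj (inl a) (inr b) → a = 0 ∨ b = Fin.last m) :
    IsRanking H (m + 2) (optimalLabel m) := by
  refine isRanking_of_lt_or_lt ?_ ?_ ?_ ?_
  · rintro (i | j) <;> simp only [optimalLabel, elim_inl, elim_inr]
    · omega
    · split_ifs <;> omega
  · intro i j h
    simp only [comp_apply, optimalLabel, elim_inl] at h
    exact Fin.ext (by omega)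
  · intro i j h
    simp only [comp_apply, optimalLabel, elim_inr] at h
    exact Fin.ext (by split_ifs at h <;> omega)
  · intro a b i j hab hij
    simp only [optimalLabel, elim_inl, elim_inr] at hij ⊢
    rcases hcov a b hab with rfl | rfl
    · left
      split_ifs at hij <;> simp <;> omega
    · right
      split_ifs at hij <;> simp <;> omega

theorem rankNumber_eq_of_cover {H : SimpleGraph (Fin (m + 1) ⊕ Fin (m + 1))}
    (hG : twoCliques (m + 1) ≤ H)
    (hcov : ∀ a b, H.Adj (inl a) (inr b) → a = 0 ∨ b = Fin.last m) :
    rankNumber H = m + 2 := by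
  have hf := isRanking_optimalLabel hcov
  refine le_antisymm (rankNumber_le hf) (le_rankNumber_s19 hf fun k f hf' => ?_)
  have := hf'.card_add_one_le ((sum_top_le_twoCliques _).trans hG)
    (hG (twoCliques_adj_inl_inr.2 ⟨rfl, rfl⟩))
  rwa [Fintype.card_fin] at this

theorem card_map_erase_crossStar {w x : Fin (m + 1)} {p : Fin (m + 1) × Fin (m + 1)}
    (hp : p ∈ crossStar w x) : #(((crossStar w x).erase p).map crossEdge) = 2 * m := by
  have := card_crossStar w x
  rw [card_map, card_erase_of_mem hp]
  simp only [Fintype.card_fin] at this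
  omega

theorem card_le_of_rankNumber_eq (hm : 1 ≤ m) {S : Finset (Sym2 (Fin (m + 1) ⊕ Fin (m + 1)))}
    (hS : ∀ e ∈ S, ¬e.IsDiag ∧ e ∉ (twoCliques (m + 1)).edgeSet)
    (hr : rankNumber (twoCliques (m + 1) ⊔ fromEdgeSet (S : Set _)) = m + 2) :
    #S ≤ 2 * m := by
  set H := twoCliques (m + 1) ⊔ fromEdgeSet (S : Set _)
  have hG : twoCliques (m + 1) ≤ H := le_sup_left
  obtain ⟨g, hg⟩ := exists_isRanking_rankNumber_s19 (hr ▸ m.succ_pos.trans (lt_add_one _))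
  replace hg : IsRanking H (Fintype.card (Fin (m + 1)) + 1) g := by
    rwa [Fintype.card_fin, ← hr]
  obtain ⟨w, x, hwx⟩ :=
    hg.exists_cover ((sum_top_le_twoCliques _).trans hG) (by simpa using hm)
  have hbridge : (0, Fin.last m) ∈ crossStar w x :=
    mem_filter.2 ⟨mem_univ _, hwx _ _ (hG (twoCliques_adj_inl_inr.2 ⟨rfl, rfl⟩))⟩
  rw [← card_map_erase_crossStar hbridge]
  refine card_le_card fun e he => ?_
  obtain ⟨⟨a, b⟩, rfl⟩ := exists_crossEdge_eq (hS e he).1 (hS e he).2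
  refine mem_map_of_mem _ (mem_erase.2 ⟨?_, mem_filter.2 ⟨mem_univ _, hwx a b ?_⟩⟩)
  · rintro ⟨⟩
    exact (hS _ he).2 (twoCliques_adj_inl_inr.2 ⟨rfl, rfl⟩)
  · exact .inr ((fromEdgeSet_adj _).2 ⟨he, (hS _ he).1⟩)

def extremalEdges (m : ℕ) : Finset (Sym2 (Fin (m + 1) ⊕ Fin (m + 1))) :=
  ((crossStar 0 (Fin.last m)).erase (0, Fin.last m)).map crossEdge

theorem extremalEdges_not_mem_edgeSet :
    ∀ e ∈ extremalEdges m, ¬e.IsDiag ∧ e ∉ (twoCliques (m + 1)).edgeSet := by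
  simp only [extremalEdges, mem_map, mem_erase]
  rintro _ ⟨⟨a, b⟩, ⟨hne, -⟩, rfl⟩
  refine ⟨by simp, fun h => hne ?_⟩
  obtain ⟨rfl, rfl⟩ := twoCliques_adj_inl_inr.1 h
  rfl

theorem rankNumber_sup_extremalEdges :
    rankNumber (twoCliques (m + 1) ⊔ fromEdgeSet (extremalEdges m : Set _)) = m + 2 := by
  refine rankNumber_eq_of_cover le_sup_left fun a b h => ?_
  rcases h with h | h
  · exact .inl (twoCliques_adj_inl_inr.1 h).1
  · obtain ⟨⟨a', b'⟩, hab, he⟩ := mem_map.1 (mem_coe.1 ((fromEdgeSet_adj _).1 h).1)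
    obtain ⟨rfl, rfl⟩ : a' = a ∧ b' = b := by simpa using he
    exact (mem_filter.1 (mem_of_mem_erase hab)).2

end TwoCliques

/-- for every integer `n ≥ 2`, `μ(G_n) = 2(n - 1)`: the maximum number of
edges that can be added to `G_n` without changing its rank number. -/
theorem mu_twoCliques (n : ℕ) (hn : 2 ≤ n) :
    mu (twoCliques n) = 2 * (n - 1) := by
  obtain ⟨m, rfl⟩ : ∃ m, n = m + 1 := ⟨n - 1, by omega⟩
  have hrank : rankNumber (twoCliques (m + 1)) = m + 2 :=
    rankNumber_eq_of_cover le_rfl fun a b h => .inl (twoCliques_adj_inl_inr.1 h).1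
  refine IsGreatest.csSup_eq ⟨⟨extremalEdges m, ?_, extremalEdges_not_mem_edgeSet,
    by rw [rankNumber_sup_extremalEdges, hrank]⟩, ?_⟩
  · exact card_map_erase_crossStar (mem_filter.2 ⟨mem_univ _, .inl rfl⟩)
  rintro _ ⟨S, rfl, hS, hr⟩
  simpa using card_le_of_rankNumber_eq (by omega) hS (hr.trans hrank)
end
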